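/- arXiv:0810.2821 — 6 statements merged into one kernel-verified Lean document; each statement's English description precedes it below -/
import Mathlib

section
/- Kolmogorov–Hájek–Rényi inequality: Let (X_j)_{j=0}^n be a square-integrable martingale with X_0 = 0, and let 0 = ε_0 ≤ ε_1 ≤ … ≤ ε_n be nondecreasing positive reals. Then P(for all j ∈ [1,n], |X_j| < ε_j) ≥ 1 − Σ_{i=1}^n E[(X_i − X_{i−1})²]/ε_i². -/
open MeasureTheory

/-!
Let `C k` be the event that `|X j| < ε j` for all `1 ≤ j ≤ k`. The events decrease, so
`1 - P (C n)` is the sum of the probabilities of the exit events `C k \ C (k + 1)`, and by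
Chebyshev each is at most `∫ X (k + 1) ^ 2 / ε (k + 1) ^ 2` over that exit event.

Since `C k` is `ℱ k`-measurable, the increment `X (k + 1) - X k` is orthogonal to `X k` on it, so
`∫_{C k} X (k + 1) ^ 2 = ∫_{C k} X k ^ 2 + ∫_{C k} (X (k + 1) - X k) ^ 2`. As `ε` is nondecreasing,
the quantity
`∑_{k < n} ∫_{C k \ C (k + 1)} X (k + 1) ^ 2 / ε (k + 1) ^ 2 + ∫_{C n} X n ^ 2 / ε n ^ 2`
therefore grows by at most `E[(X (n + 1) - X n) ^ 2] / ε (n + 1) ^ 2` from `n` to `n + 1`;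
it vanishes at `n = 0` and dominates `1 - P (C n)`.
-/

namespace MeasureTheory.Martingale

variable {Ω ι : Type*} [m : MeasurableSpace Ω] [Preorder ι] {P : Measure Ω} [IsFiniteMeasure P]
  {ℱ : Filtration ι m} {X : ι → Ω → ℝ} {i j : ι} {S : Set Ω}

theorem setIntegral_mul_eq_setIntegral_sq (hX : Martingale X ℱ P) (hij : i ≤ j)
    (hS : MeasurableSet[ℱ i] S) (hXX : Integrable (X i * X j) P) :
    ∫ ω in S, X i ω * X j ω ∂P = ∫ ω in S, X i ω ^ 2 ∂P := by
  change ∫ ω in S, (X i * X j) ω ∂P = _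
  rw [← setIntegral_condExp (ℱ.le i) hXX hS]
  refine setIntegral_congr_ae (ℱ.le i S hS) ?_
  filter_upwards [condExp_mul_of_stronglyMeasurable_left (hX.stronglyAdapted i) hXX
    (hX.integrable j), hX.condExp_ae_eq hij] with ω hpull hcond _
  rw [hpull, Pi.mul_apply, hcond, sq]

theorem setIntegral_sq_eq_add_setIntegral_sq_sub (hX : Martingale X ℱ P)
    (hi : MemLp (X i) 2 P) (hj : MemLp (X j) 2 P) (hij : i ≤ j) (hS : MeasurableSet[ℱ i] S) :
    ∫ ω in S, X j ω ^ 2 ∂P = ∫ ω in S, X i ω ^ 2 ∂P + ∫ ω in S, (X j ω - X i ω) ^ 2 ∂P := by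
  have hXX : Integrable (X i * X j) P := hi.integrable_mul hj
  have hcross := hX.setIntegral_mul_eq_setIntegral_sq hij hS hXX
  have hXi := hi.integrable_sq.restrict (s := S)
  have hXj := hj.integrable_sq.restrict (s := S)
  have hexpand : ∫ ω in S, (X j ω - X i ω) ^ 2 ∂P =
      ∫ ω in S, X j ω ^ 2 ∂P + ∫ ω in S, X i ω ^ 2 ∂P - 2 * ∫ ω in S, X i ω * X j ω ∂P := by
    simp_rw [sub_sq', mul_assoc, mul_comm (X j _)]
    rw [integral_sub (by exact hXj.add hXi) (by exact hXX.restrict.const_mul 2),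
      integral_add hXj hXi, integral_const_mul]
  linarith

end MeasureTheory.Martingale

section BoundedUntil

variable {Ω : Type*} (X : ℕ → Ω → ℝ) (ε : ℕ → ℝ)

def boundedUntil (k : ℕ) : Set Ω := {ω | ∀ j ∈ Finset.Icc 1 k, |X j ω| < ε j}

@[simp]
theorem boundedUntil_zero : boundedUntil X ε 0 = Set.univ := by
  simp [boundedUntil]

theorem boundedUntil_succ (k : ℕ) :
    boundedUntil X ε (k + 1) = boundedUntil X ε k ∩ {ω | |X (k + 1) ω| < ε (k + 1)} := by
  ext ω
  rw [boundedUntil, ← Finset.insert_Icc_right_eq_Icc_add_one (Nat.le_add_left 1 k)]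
  simp [boundedUntil, and_comm]

theorem antitone_boundedUntil : Antitone (boundedUntil X ε) :=
  antitone_nat_of_succ_le fun k => (boundedUntil_succ X ε k).trans_subset Set.inter_subset_left

theorem measurableSet_boundedUntil {m : MeasurableSpace Ω} {ℱ : Filtration ℕ m}
    (hX : StronglyAdapted ℱ X) (k : ℕ) : MeasurableSet[ℱ k] (boundedUntil X ε k) := by
  simp only [boundedUntil, Set.ofPred_forall]
  exact Finset.measurableSet_biInter _ fun j hj => ℱ.mono (Finset.mem_Icc.1 hj).2 _
    (measurable_abs.comp (hX j).measurable measurableSet_Iio)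

theorem le_abs_of_mem_boundedUntil_sdiff {X : ℕ → Ω → ℝ} {ε : ℕ → ℝ} {k : ℕ} {ω : Ω}
    (hω : ω ∈ boundedUntil X ε k \ boundedUntil X ε (k + 1)) : ε (k + 1) ≤ |X (k + 1) ω| := by
  rw [boundedUntil_succ] at hω
  exact not_lt.1 fun h => hω.2 ⟨hω.1, h⟩

end BoundedUntil

section FiniteMeasure

variable {Ω : Type*} [MeasurableSpace Ω] {μ : Measure Ω} [IsFiniteMeasure μ]

theorem measureReal_le_setIntegral_sq_div {f : Ω → ℝ} {s : Set Ω} {c : ℝ} (hc : 0 < c)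
    (hs : MeasurableSet s) (hf : Integrable (fun ω => f ω ^ 2) μ) (hle : ∀ ω ∈ s, c ≤ |f ω|) :
    μ.real s ≤ (∫ ω in s, f ω ^ 2 ∂μ) / c ^ 2 := by
  rw [le_div_iff₀ (by positivity), mul_comm]
  refine setIntegral_ge_of_const_le_real hs (measure_ne_top μ s) (fun ω hω => ?_) hf.integrableOn
  rw [← sq_abs (f ω)]
  exact pow_le_pow_left₀ hc.le (hle ω hω) 2

theorem measureReal_sub_measureReal_eq_sum_sdiff {s : ℕ → Set Ω} (hs : Antitone s)
    (hmeas : ∀ k, MeasurableSet (s k)) (n : ℕ) :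
    μ.real (s 0) - μ.real (s n) = ∑ k ∈ Finset.range n, μ.real (s k \ s (k + 1)) := by
  rw [← Finset.sum_range_sub' (fun k => μ.real (s k))]
  exact Finset.sum_congr rfl fun k _ => (measureReal_sdiff (hs k.le_succ) (hmeas (k + 1))).symm

end FiniteMeasure

namespace MeasureTheory.Martingale

variable {Ω : Type*} [m : MeasurableSpace Ω] {P : Measure Ω} [IsFiniteMeasure P]
  {ℱ : Filtration ℕ m} {X : ℕ → Ω → ℝ} {ε : ℕ → ℝ}

theorem setIntegral_sq_succ_div_le (hX : Martingale X ℱ P) (hL2 : ∀ i, MemLp (X i) 2 P)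
    (hX0 : X 0 = 0) (hmono : Monotone ε) (hpos : ∀ j, 1 ≤ j → 0 < ε j) {k : ℕ} {S : Set Ω}
    (hS : MeasurableSet[ℱ k] S) :
    (∫ ω in S, X (k + 1) ω ^ 2 ∂P) / ε (k + 1) ^ 2 ≤
      (∫ ω in S, X k ω ^ 2 ∂P) / ε k ^ 2 +
        (∫ ω, (X (k + 1) ω - X k ω) ^ 2 ∂P) / ε (k + 1) ^ 2 := by
  rw [hX.setIntegral_sq_eq_add_setIntegral_sq_sub (hL2 k) (hL2 (k + 1)) k.le_succ hS, add_div]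
  gcongr ?_ + ?_
  · -- `ε 0` may vanish, and `a / 0 = 0`; it is `X 0 = 0` that saves this case.
    rcases k.eq_zero_or_pos with rfl | hk
    · simp [hX0]
    · exact div_le_div_of_nonneg_left (setIntegral_nonneg (ℱ.le k S hS) fun ω _ => sq_nonneg _)
        (pow_pos (hpos k hk) 2) (pow_le_pow_left₀ (hpos k hk).le (hmono k.le_succ) 2)
  · have hd : Integrable (fun ω => (X (k + 1) ω - X k ω) ^ 2) P :=
      ((hL2 (k + 1)).sub (hL2 k)).integrable_sq
    exact div_le_div_of_nonneg_right
      (setIntegral_le_integral hd (ae_of_all _ fun ω => sq_nonneg _)) (sq_nonneg _)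

theorem sum_setIntegral_sq_exit_add_le (hX : Martingale X ℱ P) (hL2 : ∀ i, MemLp (X i) 2 P)
    (hX0 : X 0 = 0) (hmono : Monotone ε) (hpos : ∀ j, 1 ≤ j → 0 < ε j) (n : ℕ) :
    ∑ k ∈ Finset.range n, (∫ ω in boundedUntil X ε k \ boundedUntil X ε (k + 1),
        X (k + 1) ω ^ 2 ∂P) / ε (k + 1) ^ 2 +
      (∫ ω in boundedUntil X ε n, X n ω ^ 2 ∂P) / ε n ^ 2 ≤
    ∑ i ∈ Finset.Icc 1 n, (∫ ω, (X i ω - X (i - 1) ω) ^ 2 ∂P) / ε i ^ 2 := by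
  induction n with
  | zero => simp [hX0]
  | succ n ih =>
    have hC := measurableSet_boundedUntil X ε hX.stronglyAdapted
    rw [Finset.sum_range_succ, Finset.sum_Icc_succ_top (Nat.le_add_left 1 n),
      setIntegral_sdiff (ℱ.le _ _ (hC (n + 1))) (hL2 (n + 1)).integrable_sq.integrableOn
        (antitone_boundedUntil X ε n.le_succ), sub_div, Nat.add_sub_cancel]
    linarith [hX.setIntegral_sq_succ_div_le hL2 hX0 hmono hpos (hC n)]

end MeasureTheory.Martingale

theorem kolmogorov_hajek_renyi_general {Ω : Type*} [m : MeasurableSpace Ω]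
    (P : Measure Ω) [IsProbabilityMeasure P] (ℱ : Filtration ℕ m)
    (X : ℕ → Ω → ℝ) (hmart : Martingale X ℱ P) (hX0 : X 0 = 0)
    (hL2 : ∀ i, MemLp (X i) 2 P)
    (n : ℕ) (ε : ℕ → ℝ) (hmono : Monotone ε)
    (hpos : ∀ j, 1 ≤ j → 0 < ε j) :
    1 - ∑ i ∈ Finset.Icc 1 n, (∫ ω, (X i ω - X (i - 1) ω) ^ 2 ∂P) / (ε i) ^ 2 ≤
      (P {ω | ∀ j ∈ Finset.Icc 1 n, |X j ω| < ε j}).toReal := by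
  set C := boundedUntil X ε
  have hC k : MeasurableSet (C k) :=
    ℱ.le k _ (measurableSet_boundedUntil X ε hmart.stronglyAdapted k)
  have hexit k : P.real (C k \ C (k + 1)) ≤
      (∫ ω in C k \ C (k + 1), X (k + 1) ω ^ 2 ∂P) / ε (k + 1) ^ 2 :=
    measureReal_le_setIntegral_sq_div (hpos (k + 1) (Nat.le_add_left 1 k))
      ((hC k).diff (hC (k + 1))) (hL2 (k + 1)).integrable_sq
      fun ω => le_abs_of_mem_boundedUntil_sdiff
  have htel : 1 - P.real (C n) = ∑ k ∈ Finset.range n, P.real (C k \ C (k + 1)) := by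
    rw [← measureReal_sub_measureReal_eq_sum_sdiff (antitone_boundedUntil X ε) hC n,
      boundedUntil_zero, probReal_univ]
  have hlast : 0 ≤ (∫ ω in C n, X n ω ^ 2 ∂P) / ε n ^ 2 :=
    div_nonneg (setIntegral_nonneg (hC n) fun ω _ => sq_nonneg _) (sq_nonneg _)
  change _ ≤ P.real (C n)
  linarith [Finset.sum_le_sum fun k (_ : k ∈ Finset.range n) => hexit k,
    hmart.sum_setIntegral_sq_exit_add_le hL2 hX0 hmono hpos n]

/-- Kolmogorov–Hájek–Rényi inequality: if `(X_j)` is a square-integrable martingale with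
`X 0 = 0` and `0 = ε_0 ≤ ε_1 ≤ …` with `ε_j > 0` for `j ≥ 1`, then
`P(∀ j ∈ [1,n], |X_j| < ε_j) ≥ 1 - Σ_{i=1}^n E[(X_i - X_{i-1})²]/ε_i²`. -/
theorem kolmogorov_hajek_renyi {Ω : Type*} [m : MeasurableSpace Ω]
    (P : Measure Ω) [IsProbabilityMeasure P] (ℱ : Filtration ℕ m)
    (X : ℕ → Ω → ℝ) (hmart : Martingale X ℱ P) (hX0 : X 0 = 0)
    (hL2 : ∀ i, MemLp (X i) 2 P)
    (n : ℕ) (ε : ℕ → ℝ) (hε0 : ε 0 = 0) (hmono : Monotone ε)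
    (hpos : ∀ j, 1 ≤ j → 0 < ε j) :
    1 - ∑ i ∈ Finset.Icc 1 n, (∫ ω, (X i ω - X (i - 1) ω) ^ 2 ∂P) / (ε i) ^ 2 ≤
      (P {ω | ∀ j ∈ Finset.Icc 1 n, |X j ω| < ε j}).toReal :=
  kolmogorov_hajek_renyi_general (m := m) P ℱ X hmart hX0 hL2 n ε hmono hpos
end

section
/- Suppose X_1,…,X_n are bounded random variables with sup X_i − inf X_i ≤ B_i, and let K be a set of probability measures whose upper expectation Ē satisfies the factorization property Ē[∏_{i=1}^n f_i(X_i)] ≤ ∏_{i=1}^n Ē[f_i(X_i)] for all bounded nonnegative functions f_i. Then for γ_n = Σ B_i² > 0 and any ε > 0, the upper probability satisfies P̄(Σ_{i=1}^n (X_i − Ē[X_i]) ≥ ε) ≤ exp(−2ε²/γ_n). -/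
open MeasureTheory ProbabilityTheory Real Set Finset

/-!
Chernoff's method: for `P ∈ K` and `t ≥ 0`, with `S = ∑ (X i - Ē[X i])`,
`P(S ≥ ε) ≤ exp (-t ε) E_P[exp (t S)] ≤ exp (-t ε) Ē[∏ exp (t (X i - Ē[X i]))]`, and the
factorization property splits the last upper expectation into the product of the
`Ē[exp (t (X i - Ē[X i]))]`. Since `E_Q[X i] ≤ Ē[X i]` for every `Q ∈ K`, Hoeffding's lemma bounds
each factor by `exp (t² B_i² / 8)`, and `t = 4ε/γ` optimizes `-t ε + t² γ / 8`.
-/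

namespace Real

lemma biSup_le_of_forall_le {ι : Type*} {s : Set ι} {g : ι → ℝ} {M : ℝ} (hM : 0 ≤ M)
    (h : ∀ i ∈ s, g i ≤ M) : ⨆ i ∈ s, g i ≤ M :=
  Real.iSup_le (fun i => Real.iSup_le (h i) hM) hM

lemma le_biSup_of_forall_le {ι : Type*} {s : Set ι} {g : ι → ℝ} {M : ℝ}
    (h : ∀ i ∈ s, g i ≤ M) {i : ι} (hi : i ∈ s) : g i ≤ ⨆ j ∈ s, g j :=
  le_ciSup₂ (f := fun j (_ : j ∈ s) => g j) ⟨M, by simpa [upperBounds] using h⟩ i hi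

end Real

lemma mem_Icc_iInf_of_sub_le {Ω : Type*} [Nonempty Ω] {g : Ω → ℝ} {B : ℝ}
    (h : ∀ ω ω', g ω - g ω' ≤ B) (ω : Ω) : g ω ∈ Icc (⨅ ω, g ω) ((⨅ ω, g ω) + B) := by
  have hbdd : BddBelow (range g) := ⟨g ω - B, forall_mem_range.2 fun ω' => by linarith [h ω ω']⟩
  have : g ω - B ≤ ⨅ ω, g ω := le_ciInf fun ω' => by linarith [h ω ω']
  exact ⟨ciInf_le hbdd ω, by linarith⟩

/-- Hoeffding's lemma, centred at an upper bound `m` of the mean instead of the mean itself. -/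
lemma integral_exp_mul_sub_le_of_integral_le {Ω : Type*} [MeasurableSpace Ω] {P : Measure Ω}
    [IsProbabilityMeasure P] {Y : Ω → ℝ} (hY : AEMeasurable Y P) {a b m t : ℝ}
    (hab : ∀ᵐ ω ∂P, Y ω ∈ Icc a b) (hm : P[Y] ≤ m) (ht : 0 ≤ t) :
    ∫ ω, exp (t * (Y ω - m)) ∂P ≤ exp (t ^ 2 * (b - a) ^ 2 / 8) := by
  have hsub := hasSubgaussianMGF_of_mem_Icc hY hab
  calc ∫ ω, exp (t * (Y ω - m)) ∂P = exp (t * (P[Y] - m)) * mgf (fun ω => Y ω - P[Y]) P t := by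
        rw [mgf, ← integral_const_mul]
        congr 1 with ω
        rw [← exp_add]
        ring_nf
    _ ≤ 1 * exp (((‖b - a‖₊ / 2) ^ 2 : NNReal) * t ^ 2 / 2) :=
        mul_le_mul (exp_le_one_iff.2 (mul_nonpos_of_nonneg_of_nonpos ht (by linarith)))
          (hsub.mgf_le t) mgf_nonneg zero_le_one
    _ = exp (t ^ 2 * (b - a) ^ 2 / 8) := by
        push_cast [coe_nnnorm, norm_eq_abs]
        rw [div_pow, sq_abs, one_mul]
        ring_nf

section UpperExpectation

variable {Ω : Type*} [MeasurableSpace Ω]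

/-- The upper expectation `Ē[g]`; as a real `⨆` it is `0` when `K` is empty or the integrals
are unbounded. -/
noncomputable def upperExp (K : Set (Measure Ω)) (g : Ω → ℝ) : ℝ :=
  ⨆ P ∈ K, ∫ ω, g ω ∂P

variable {K : Set (Measure Ω)} {g : Ω → ℝ}

lemma upperExp_le {M : ℝ} (hM : 0 ≤ M) (h : ∀ P ∈ K, ∫ ω, g ω ∂P ≤ M) : upperExp K g ≤ M :=
  Real.biSup_le_of_forall_le hM h

lemma upperExp_nonneg (hg : ∀ ω, 0 ≤ g ω) : 0 ≤ upperExp K g :=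
  Real.iSup_nonneg fun _ => Real.iSup_nonneg fun _ => integral_nonneg hg

lemma integral_le_upperExp_of_abs_le (hK : ∀ P ∈ K, IsProbabilityMeasure P) {M : ℝ}
    (hg : ∀ ω, |g ω| ≤ M) {P : Measure Ω} (hP : P ∈ K) : ∫ ω, g ω ∂P ≤ upperExp K g := by
  refine Real.le_biSup_of_forall_le (g := fun Q => ∫ ω, g ω ∂Q) (M := M) (fun Q hQ => ?_) hP
  have := hK Q hQ
  calc ∫ ω, g ω ∂Q ≤ ‖∫ ω, g ω ∂Q‖ := le_norm_self _
    _ ≤ M * Q.real univ := norm_integral_le_of_norm_le_const (ae_of_all Q hg)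
    _ = M := by simp

lemma upperExp_exp_mul_sub_upperExp_le (hK : ∀ P ∈ K, IsProbabilityMeasure P) {Y : Ω → ℝ}
    (hY : Measurable Y) {a b t : ℝ} (hab : ∀ ω, Y ω ∈ Icc a b) (ht : 0 ≤ t) :
    upperExp K (fun ω => exp (t * (Y ω - upperExp K Y))) ≤ exp (t ^ 2 * (b - a) ^ 2 / 8) :=
  upperExp_le (exp_pos _).le fun P hP => by
    have := hK P hP
    exact integral_exp_mul_sub_le_of_integral_le hY.aemeasurable (ae_of_all P hab)
      (integral_le_upperExp_of_abs_le hK (fun ω => abs_le_max_abs_abs (hab ω).1 (hab ω).2) hP) ht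

theorem integral_exp_mul_sum_le_of_factorization {ι : Type*}
    (hK : ∀ P ∈ K, IsProbabilityMeasure P)
    {s : Finset ι} {X : ι → Ω → ℝ} (hX : ∀ i, Measurable (X i)) {a B : ι → ℝ}
    (hab : ∀ i ∈ s, ∀ ω, X i ω ∈ Icc (a i) (a i + B i))
    (hfact : ∀ f : ι → ℝ → ℝ,
      (∀ i x, 0 ≤ f i x) → (∀ i, ∃ C, ∀ x, f i x ≤ C) → (∀ i, Measurable (f i)) →
      upperExp K (fun ω => ∏ i ∈ s, f i (X i ω)) ≤ ∏ i ∈ s, upperExp K (fun ω => f i (X i ω)))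
    {t : ℝ} (ht : 0 ≤ t) {P : Measure Ω} (hP : P ∈ K) :
    ∫ ω, exp (t * ∑ i ∈ s, (X i ω - upperExp K (X i))) ∂P ≤
      exp (t ^ 2 * (∑ i ∈ s, B i ^ 2) / 8) := by
  -- Clipping at the top of the range makes the factors bounded, as the factorization requires.
  set f : ι → ℝ → ℝ := fun i x => exp (t * (min x (a i + B i) - upperExp K (X i)))
  set C : ι → ℝ := fun i => exp (t * (a i + B i - upperExp K (X i)))
  have hf_pos : ∀ i x, 0 < f i x := fun i x => exp_pos _
  have hf_le : ∀ i x, f i x ≤ C i := fun i x => by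
    simp only [f, C]
    gcongr
    exact min_le_right _ _
  have hf_meas : ∀ i, Measurable (f i) := fun i => by fun_prop
  have hf_X : ∀ i ∈ s, (fun ω => f i (X i ω)) = fun ω => exp (t * (X i ω - upperExp K (X i))) :=
    fun i hi => funext fun ω => by simp only [f, min_eq_left (hab i hi ω).2]
  have hprod_abs : ∀ ω, |∏ i ∈ s, f i (X i ω)| ≤ ∏ i ∈ s, C i := fun ω => by
    rw [abs_of_pos (prod_pos fun i _ => hf_pos i _)]
    exact prod_le_prod (fun i _ => (hf_pos i _).le) fun i _ => hf_le i _
  calc ∫ ω, exp (t * ∑ i ∈ s, (X i ω - upperExp K (X i))) ∂P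
      = ∫ ω, ∏ i ∈ s, f i (X i ω) ∂P := by
        congr 1 with ω
        rw [mul_sum, exp_sum]
        exact prod_congr rfl fun i hi => (congrFun (hf_X i hi) ω).symm
    _ ≤ upperExp K (fun ω => ∏ i ∈ s, f i (X i ω)) :=
        integral_le_upperExp_of_abs_le hK hprod_abs hP
    _ ≤ ∏ i ∈ s, upperExp K (fun ω => f i (X i ω)) :=
        hfact f (fun i x => (hf_pos i x).le) (fun i => ⟨C i, hf_le i⟩) hf_meas
    _ ≤ ∏ i ∈ s, exp (t ^ 2 * B i ^ 2 / 8) := by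
        refine prod_le_prod (fun i _ => upperExp_nonneg fun ω => (hf_pos i _).le) fun i hi => ?_
        rw [hf_X i hi]
        simpa using upperExp_exp_mul_sub_upperExp_le hK (hX i) (hab i hi) ht
    _ = exp (t ^ 2 * (∑ i ∈ s, B i ^ 2) / 8) := by
        rw [← exp_sum, mul_sum, sum_div]

end UpperExpectation

lemma chernoff_exponent_eq (ε γ : ℝ) :
    -(4 * ε / γ) * ε + (4 * ε / γ) ^ 2 * γ / 8 = -2 * ε ^ 2 / γ := by
  rcases eq_or_ne γ 0 with rfl | hγ
  · simp
  · field_simp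
    ring

theorem upper_hoeffding_general {Ω : Type*} [MeasurableSpace Ω]
    (K : Set (Measure Ω)) (hKp : ∀ P ∈ K, IsProbabilityMeasure P)
    (n : ℕ) (X : ℕ → Ω → ℝ) (hmeas : ∀ i, Measurable (X i))
    (B : ℕ → ℝ)
    (hrange : ∀ i ∈ Finset.Icc 1 n, ∀ ω ω', X i ω - X i ω' ≤ B i)
    (hfact : ∀ f : ℕ → ℝ → ℝ,
      (∀ i x, 0 ≤ f i x) → (∀ i, ∃ C, ∀ x, f i x ≤ C) → (∀ i, Measurable (f i)) →
      (⨆ P ∈ K, ∫ ω, ∏ i ∈ Finset.Icc 1 n, f i (X i ω) ∂P) ≤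
        ∏ i ∈ Finset.Icc 1 n, ⨆ P ∈ K, ∫ ω, f i (X i ω) ∂P)
    (γ : ℝ) (hγ : γ = ∑ i ∈ Finset.Icc 1 n, (B i) ^ 2)
    (ε : ℝ) (hε : 0 < ε) :
    (⨆ P ∈ K,
        (P {ω | ε ≤ ∑ i ∈ Finset.Icc 1 n, (X i ω - ⨆ Q ∈ K, ∫ ω', X i ω' ∂Q)}).toReal) ≤
      Real.exp (-2 * ε ^ 2 / γ) := by
  have hγ0 : 0 ≤ γ := hγ ▸ by positivity
  set t := 4 * ε / γ
  have ht : 0 ≤ t := by positivity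
  refine Real.biSup_le_of_forall_le (exp_pos _).le fun P hP => ?_
  have := hKp P hP
  have := nonempty_of_isProbabilityMeasure P
  have hab := fun i hi => mem_Icc_iInf_of_sub_le (hrange i hi)
  set S := fun ω => ∑ i ∈ Finset.Icc 1 n, (X i ω - upperExp K (X i))
  have hS : ∀ ω, S ω ∈ Icc (∑ i ∈ Finset.Icc 1 n, ((⨅ ω, X i ω) - upperExp K (X i)))
      (∑ i ∈ Finset.Icc 1 n, ((⨅ ω, X i ω) + B i - upperExp K (X i))) := fun ω =>
    ⟨sum_le_sum fun i hi => by linarith [(hab i hi ω).1],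
      sum_le_sum fun i hi => by linarith [(hab i hi ω).2]⟩
  calc (P {ω | ε ≤ S ω}).toReal
      ≤ exp (-t * ε) * mgf S P t :=
        measure_ge_le_exp_mul_mgf ε ht
          (integrable_exp_mul_of_mem_Icc (by fun_prop) (ae_of_all P hS))
    _ ≤ exp (-t * ε) * exp (t ^ 2 * γ / 8) := by
        gcongr
        rw [hγ]
        exact integral_exp_mul_sum_le_of_factorization hKp hmeas hab hfact ht hP
    _ = exp (-2 * ε ^ 2 / γ) := by
        rw [← exp_add, ← chernoff_exponent_eq, neg_mul]

/-- Hoeffding-type inequality for upper expectations: if bounded variables `X_1, …, X_n`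
(with range of `X_i` of length at most `B_i`) satisfy the factorization property
`Ē[∏ f_i(X_i)] ≤ ∏ Ē[f_i(X_i)]` for bounded nonnegative `f_i`, then for `γ_n = Σ B_i² > 0`
and `ε > 0`, `P̄(Σ (X_i - Ē[X_i]) ≥ ε) ≤ exp (-2ε²/γ_n)`. -/
theorem upper_hoeffding {Ω : Type*} [MeasurableSpace Ω]
    (K : Set (Measure Ω)) (hK : K.Nonempty) (hKp : ∀ P ∈ K, IsProbabilityMeasure P)
    (n : ℕ) (hn : 0 < n) (X : ℕ → Ω → ℝ) (hmeas : ∀ i, Measurable (X i))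
    (B : ℕ → ℝ)
    (hrange : ∀ i ∈ Finset.Icc 1 n, ∀ ω ω', X i ω - X i ω' ≤ B i)
    (hfact : ∀ f : ℕ → ℝ → ℝ,
      (∀ i x, 0 ≤ f i x) → (∀ i, ∃ C, ∀ x, f i x ≤ C) → (∀ i, Measurable (f i)) →
      (⨆ P ∈ K, ∫ ω, ∏ i ∈ Finset.Icc 1 n, f i (X i ω) ∂P) ≤
        ∏ i ∈ Finset.Icc 1 n, ⨆ P ∈ K, ∫ ω, f i (X i ω) ∂P)
    (γ : ℝ) (hγ : γ = ∑ i ∈ Finset.Icc 1 n, (B i) ^ 2) (hγpos : 0 < γ)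
    (ε : ℝ) (hε : 0 < ε) :
    (⨆ P ∈ K,
        (P {ω | ε ≤ ∑ i ∈ Finset.Icc 1 n, (X i ω - ⨆ Q ∈ K, ∫ ω', X i ω' ∂Q)}).toReal) ≤
      Real.exp (-2 * ε ^ 2 / γ) :=
  upper_hoeffding_general K hKp n X hmeas B hrange hfact γ hγ ε hε
end

section
/- Let K be a nonempty set of probability measures on a product space carrying random variables X_1,…,X_n with sup X_i − inf X_i ≤ B_i. Assume that for every P ∈ K and every i, E_P[X_i | X_1,…,X_{i−1}] ≤ Ē[X_i] almost surely (weak irrelevance with disintegrability). Then for γ_n = Σ B_i² > 0 and any ε > 0, P̄(Σ_{i=1}^n (X_i − Ē[X_i]) ≥ ε) ≤ exp(−2ε²/γ_n). -/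
/-!
Under every `P ∈ K` the centred increments `Y i = X i - Ē[X i]` are bounded supermartingale
differences for the natural filtration of `X`. Since `x ↦ exp (t * x)` lies below its chord on
`[a, b]` and the chord is affine, `E_P[exp (t * Y i) | past]` is at most the chord evaluated at
the conditional mean, which lies in `[a, 0]`; Hoeffding's lemma for a two-point law bounds this
by `exp (t ^ 2 * B i ^ 2 / 8)`. The tower property then gives
`E_P[exp (t * ∑ Y i)] ≤ exp (t ^ 2 * γ / 8)`, and Chernoff's bound with `t = 4 ε / γ` gives
`exp (-2 ε ^ 2 / γ)` uniformly in `P`.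
-/

open MeasureTheory ProbabilityTheory Real Finset

lemma mem_Icc_ciInf_of_sub_le {ι : Type*} [Nonempty ι] {f : ι → ℝ} {B : ℝ}
    (h : ∀ x y, f x - f y ≤ B) (x : ι) : f x ∈ Set.Icc (⨅ y, f y) ((⨅ y, f y) + B) := by
  have hbdd : BddBelow (Set.range f) := ⟨f x - B, by rintro _ ⟨y, rfl⟩; linarith [h x y]⟩
  exact ⟨ciInf_le hbdd x, by linarith [le_ciInf fun y => show f x - B ≤ f y by linarith [h x y]]⟩

lemma exp_mul_le_add_slope (t : ℝ) {a b y : ℝ} (hay : a ≤ y) (hyb : y ≤ b) :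
    exp (t * y) ≤ exp (t * a) + slope (fun x => exp (t * x)) a b * (y - a) := by
  rcases hay.eq_or_lt with rfl | hay
  · simp
  have hconv : ConvexOn ℝ Set.univ (fun x => exp (t * x)) :=
    convexOn_exp.comp_linearMap (LinearMap.mul ℝ ℝ t)
  have hslope := hconv.slope_mono (Set.mem_univ a) ⟨Set.mem_univ y, hay.ne'⟩
    ⟨Set.mem_univ b, (hay.trans_le hyb).ne'⟩ hyb
  have hsecant := sub_smul_slope (fun x => exp (t * x)) a y
  simp only [smul_eq_mul, vsub_eq_sub] at hsecant
  nlinarith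

/-- Hoeffding's lemma for the law on `{a, b}` with mean `m`. -/
lemma exp_mul_add_slope_le (t : ℝ) {a b m : ℝ} (ham : a ≤ m) (hmb : m ≤ b) :
    exp (t * a) + slope (fun x => exp (t * x)) a b * (m - a)
      ≤ exp (t * m + t ^ 2 * (b - a) ^ 2 / 8) := by
  rcases (ham.trans hmb).eq_or_lt with rfl | hab
  · obtain rfl : m = a := le_antisymm hmb ham
    simp
  set p := (m - a) / (b - a) with hp
  have hp0 : 0 ≤ p := div_nonneg (by linarith) (by linarith)
  have hp1 : p ≤ 1 := (div_le_one (by linarith)).2 (by linarith)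
  set μ : Measure ℝ := ENNReal.ofReal (1 - p) • .dirac a + ENNReal.ofReal p • .dirac b
  have hintegral : ∀ f : ℝ → ℝ, ∫ x, f x ∂μ = (1 - p) * f a + p * f b := by
    intro f
    rw [integral_add_measure ((integrable_dirac (by simp)).smul_measure (by simp))
      ((integrable_dirac (by simp)).smul_measure (by simp))]
    simp [integral_smul_measure, hp0, hp1]
  have : IsProbabilityMeasure μ := ⟨by
    simp only [μ, Measure.add_apply, Measure.smul_apply, measure_univ, smul_eq_mul, mul_one]
    rw [← ENNReal.ofReal_add (by linarith) hp0]; simp⟩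
  have hIcc : ∀ᵐ x ∂μ, x ∈ Set.Icc a b := by
    refine ae_add_measure_iff.2 ⟨Measure.ae_smul_measure ?_ _, Measure.ae_smul_measure ?_ _⟩ <;>
      exact (ae_dirac_iff measurableSet_Icc).2 (by simp [hab.le])
  have hmean : μ[id] = m := by
    rw [hintegral]; simp only [id, hp]; field_simp; ring
  have hsub := (hasSubgaussianMGF_of_mem_Icc measurable_id.aemeasurable hIcc).mgf_le t
  rw [mgf, hintegral, hmean] at hsub
  have hlhs : exp (t * a) + slope (fun x => exp (t * x)) a b * (m - a)
      = exp (t * m) * ((1 - p) * exp (t * (a - m)) + p * exp (t * (b - m))) := by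
    have hea : exp (t * a) = exp (t * m) * exp (t * (a - m)) := by rw [← exp_add]; ring_nf
    have heb : exp (t * b) = exp (t * m) * exp (t * (b - m)) := by rw [← exp_add]; ring_nf
    rw [slope_def_field, hea, heb, hp]
    field_simp
    ring
  have hc : (((‖b - a‖₊ / 2) ^ 2 : NNReal) : ℝ) * t ^ 2 / 2 = t ^ 2 * (b - a) ^ 2 / 8 := by
    push_cast
    rw [norm_eq_abs, div_pow, sq_abs]
    ring
  rw [hlhs, exp_add, ← hc]
  gcongr
  exact hsub

section condExp

variable {Ω : Type*} {m mΩ : MeasurableSpace Ω} {μ : Measure Ω} [IsFiniteMeasure μ]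

lemma ae_condExp_mem_Icc (hm : m ≤ mΩ) {f : Ω → ℝ} {a b : ℝ} (hf : Integrable f μ)
    (hab : ∀ᵐ ω ∂μ, f ω ∈ Set.Icc a b) : ∀ᵐ ω ∂μ, μ[f|m] ω ∈ Set.Icc a b := by
  have hlo := condExp_mono (m := m) (integrable_const a) hf (hab.mono fun _ h => h.1)
  have hhi := condExp_mono (m := m) hf (integrable_const b) (hab.mono fun _ h => h.2)
  rw [condExp_const hm] at hlo hhi
  filter_upwards [hlo, hhi] with ω h1 h2 using ⟨h1, h2⟩

lemma condExp_const_add_mul (hm : m ≤ mΩ) {f : Ω → ℝ} (hf : Integrable f μ) (c s : ℝ) :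
    μ[fun ω => c + s * f ω|m] =ᵐ[μ] fun ω => c + s * μ[f|m] ω := by
  have hsplit : (fun ω => c + s * f ω) = (fun _ => c) + s • f := rfl
  rw [hsplit]
  filter_upwards [condExp_add (integrable_const c) (hf.smul s) m, condExp_smul s f m]
    with ω hadd hsmul
  rw [hadd, Pi.add_apply, condExp_const hm, hsmul]
  rfl

lemma condExp_sub_const (hm : m ≤ mΩ) {f : Ω → ℝ} (hf : Integrable f μ) (c : ℝ) :
    μ[fun ω => f ω - c|m] =ᵐ[μ] fun ω => μ[f|m] ω - c := by
  simpa [sub_eq_neg_add] using condExp_const_add_mul hm hf (-c) 1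

lemma integral_mul_le_of_condExp_le (hm : m ≤ mΩ) {W Z : Ω → ℝ} {R C : ℝ}
    (hW : StronglyMeasurable[m] W) (hWR : ∀ ω, W ω ∈ Set.Icc 0 R) (hZ : Integrable Z μ)
    (hZC : μ[Z|m] ≤ᵐ[μ] fun _ => C) :
    ∫ ω, W ω * Z ω ∂μ ≤ (∫ ω, W ω ∂μ) * C := by
  have hWbdd : ∀ᵐ ω ∂μ, ‖W ω‖ ≤ R := ae_of_all _ fun ω => by
    rw [norm_of_nonneg (hWR ω).1]; exact (hWR ω).2
  have hWm : AEStronglyMeasurable W μ := (hW.mono hm).aestronglyMeasurable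
  have hWZ : Integrable (W * Z) μ := hZ.bdd_mul hWm hWbdd
  calc ∫ ω, W ω * Z ω ∂μ = ∫ ω, μ[W * Z|m] ω ∂μ := (integral_condExp hm).symm
    _ = ∫ ω, W ω * μ[Z|m] ω ∂μ :=
        integral_congr_ae (condExp_mul_of_stronglyMeasurable_left hW hWZ hZ)
    _ ≤ ∫ ω, W ω * C ∂μ := by
        refine integral_mono_ae (integrable_condExp.bdd_mul hWm hWbdd)
          ((integrable_const C).bdd_mul hWm hWbdd) ?_
        filter_upwards [hZC] with ω h
        exact mul_le_mul_of_nonneg_left h (hWR ω).1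
    _ = (∫ ω, W ω ∂μ) * C := integral_mul_const C W

lemma condExp_exp_mul_le_of_condExp_nonpos (hm : m ≤ mΩ) {Y : Ω → ℝ} (hY : Measurable Y)
    {a b t : ℝ} (ht : 0 ≤ t) (hYab : ∀ ω, Y ω ∈ Set.Icc a b) (hcond : μ[Y|m] ≤ᵐ[μ] 0) :
    μ[fun ω => exp (t * Y ω)|m] ≤ᵐ[μ] fun _ => exp (t ^ 2 * (b - a) ^ 2 / 8) := by
  set s := slope (fun x => exp (t * x)) a b
  have hYint : Integrable Y μ := .of_mem_Icc a b hY.aemeasurable (ae_of_all _ hYab)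
  have hchord := condExp_mono (m := m) (g := fun ω => exp (t * a) - s * a + s * Y ω)
    (integrable_exp_mul_of_mem_Icc hY.aemeasurable (ae_of_all _ hYab))
    ((integrable_const (exp (t * a) - s * a)).add (hYint.const_mul s))
    (ae_of_all _ fun ω => show exp (t * Y ω) ≤ exp (t * a) - s * a + s * Y ω by
      linarith [exp_mul_le_add_slope t (hYab ω).1 (hYab ω).2])
  filter_upwards [hchord, condExp_const_add_mul hm hYint (exp (t * a) - s * a) s,
    ae_condExp_mem_Icc hm hYint (ae_of_all _ hYab), hcond] with ω hle heq hmem hnonpos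
  calc μ[fun ω => exp (t * Y ω)|m] ω ≤ exp (t * a) + s * (μ[Y|m] ω - a) := by
        rw [heq] at hle; linarith
    _ ≤ exp (t * μ[Y|m] ω + t ^ 2 * (b - a) ^ 2 / 8) := exp_mul_add_slope_le t hmem.1 hmem.2
    _ ≤ exp (t ^ 2 * (b - a) ^ 2 / 8) := by
        gcongr; linarith [mul_nonpos_of_nonneg_of_nonpos ht hnonpos]

end condExp

section Azuma

variable {Ω : Type*} {mΩ : MeasurableSpace Ω} {μ : Measure Ω} [IsProbabilityMeasure μ]
  {𝒢 : ℕ → MeasurableSpace Ω}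

lemma integral_prod_le_prod_of_condExp_le (h𝒢 : Monotone 𝒢) (hle : ∀ i, 𝒢 i ≤ mΩ)
    {Z : ℕ → Ω → ℝ} {R C : ℕ → ℝ} (n : ℕ) (hZ : ∀ i ∈ Icc 1 n, StronglyMeasurable[𝒢 i] (Z i))
    (hZR : ∀ i ∈ Icc 1 n, ∀ ω, Z i ω ∈ Set.Icc 0 (R i)) (hC : ∀ i ∈ Icc 1 n, 0 ≤ C i)
    (hZC : ∀ i ∈ Icc 1 n, μ[Z i|𝒢 (i - 1)] ≤ᵐ[μ] fun _ => C i) :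
    ∫ ω, ∏ i ∈ Icc 1 n, Z i ω ∂μ ≤ ∏ i ∈ Icc 1 n, C i := by
  induction n with
  | zero => simp
  | succ n ih =>
    have hsub : Icc 1 n ⊆ Icc 1 (n + 1) := Icc_subset_Icc_right n.le_succ
    have hn : n + 1 ∈ Icc 1 (n + 1) := right_mem_Icc.2 n.succ_pos
    have hW : StronglyMeasurable[𝒢 n] fun ω => ∏ i ∈ Icc 1 n, Z i ω :=
      Finset.stronglyMeasurable_fun_prod _ fun i hi =>
        (hZ i (hsub hi)).mono (h𝒢 (mem_Icc.1 hi).2)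
    have hWR : ∀ ω, ∏ i ∈ Icc 1 n, Z i ω ∈ Set.Icc 0 (∏ i ∈ Icc 1 n, R i) := fun ω =>
      ⟨prod_nonneg fun i hi => (hZR i (hsub hi) ω).1,
        prod_le_prod (fun i hi => (hZR i (hsub hi) ω).1) fun i hi => (hZR i (hsub hi) ω).2⟩
    have hZint : Integrable (Z (n + 1)) μ := .of_mem_Icc 0 (R (n + 1))
      ((hZ _ hn).mono (hle _)).measurable.aemeasurable (ae_of_all _ (hZR _ hn))
    simp only [prod_Icc_succ_top n.succ_pos]
    calc ∫ ω, (∏ i ∈ Icc 1 n, Z i ω) * Z (n + 1) ω ∂μ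
        ≤ (∫ ω, ∏ i ∈ Icc 1 n, Z i ω ∂μ) * C (n + 1) :=
          integral_mul_le_of_condExp_le (hle n) hW hWR hZint (hZC (n + 1) hn)
      _ ≤ (∏ i ∈ Icc 1 n, C i) * C (n + 1) :=
          mul_le_mul_of_nonneg_right (ih (fun i hi => hZ i (hsub hi))
            (fun i hi => hZR i (hsub hi)) (fun i hi => hC i (hsub hi))
            (fun i hi => hZC i (hsub hi))) (hC _ hn)

lemma mgf_sum_le_of_condExp_nonpos (h𝒢 : Monotone 𝒢) (hle : ∀ i, 𝒢 i ≤ mΩ)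
    {Y : ℕ → Ω → ℝ} {a B : ℕ → ℝ} {n : ℕ} (hY : ∀ i ∈ Icc 1 n, Measurable[𝒢 i] (Y i))
    (hYB : ∀ i ∈ Icc 1 n, ∀ ω, Y i ω ∈ Set.Icc (a i) (a i + B i))
    (hcond : ∀ i ∈ Icc 1 n, μ[Y i|𝒢 (i - 1)] ≤ᵐ[μ] 0) {t : ℝ} (ht : 0 ≤ t) :
    mgf (fun ω => ∑ i ∈ Icc 1 n, Y i ω) μ t ≤ exp (t ^ 2 * (∑ i ∈ Icc 1 n, B i ^ 2) / 8) := by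
  calc mgf (fun ω => ∑ i ∈ Icc 1 n, Y i ω) μ t
      = ∫ ω, ∏ i ∈ Icc 1 n, exp (t * Y i ω) ∂μ := by simp only [mgf, mul_sum, exp_sum]
    _ ≤ ∏ i ∈ Icc 1 n, exp (t ^ 2 * B i ^ 2 / 8) :=
        integral_prod_le_prod_of_condExp_le (R := fun i => exp (t * (a i + B i))) h𝒢 hle n
          (fun i hi => (measurable_exp.comp ((hY i hi).const_mul t)).stronglyMeasurable)
          (fun i hi ω => ⟨(exp_pos _).le, by gcongr; exact (hYB i hi ω).2⟩)
          (fun i _ => (exp_pos _).le)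
          (fun i hi => by
            simpa using condExp_exp_mul_le_of_condExp_nonpos (hle (i - 1))
              ((hY i hi).mono (hle i) le_rfl) ht (hYB i hi) (hcond i hi))
    _ = exp (t ^ 2 * (∑ i ∈ Icc 1 n, B i ^ 2) / 8) := by rw [← exp_sum, ← sum_div, ← mul_sum]

theorem measureReal_sum_sub_ge_le_of_condExp_le (h𝒢 : Monotone 𝒢) (hle : ∀ i, 𝒢 i ≤ mΩ)
    {X : ℕ → Ω → ℝ} {c B : ℕ → ℝ} {n : ℕ} (hX : ∀ i ∈ Icc 1 n, Measurable[𝒢 i] (X i))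
    (hXB : ∀ i ∈ Icc 1 n, ∀ ω ω', X i ω - X i ω' ≤ B i)
    (hcond : ∀ i ∈ Icc 1 n, μ[X i|𝒢 (i - 1)] ≤ᵐ[μ] fun _ => c i) {ε : ℝ} (hε : 0 ≤ ε)
    (hB : 0 < ∑ i ∈ Icc 1 n, B i ^ 2) :
    μ.real {ω | ε ≤ ∑ i ∈ Icc 1 n, (X i ω - c i)}
      ≤ exp (-2 * ε ^ 2 / ∑ i ∈ Icc 1 n, B i ^ 2) := by
  have := nonempty_of_isProbabilityMeasure μ
  set γ := ∑ i ∈ Icc 1 n, B i ^ 2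
  set t := 4 * ε / γ
  have ht : 0 ≤ t := by positivity
  set Y : ℕ → Ω → ℝ := fun i ω => X i ω - c i
  have hYB : ∀ i ∈ Icc 1 n, ∀ ω, Y i ω ∈ Set.Icc (⨅ ω, Y i ω) ((⨅ ω, Y i ω) + B i) :=
    fun i hi => mem_Icc_ciInf_of_sub_le fun ω ω' => by simpa [Y] using hXB i hi ω ω'
  have hY : ∀ i ∈ Icc 1 n, Measurable[𝒢 i] (Y i) := fun i hi => (hX i hi).sub_const _
  have hYcond : ∀ i ∈ Icc 1 n, μ[Y i|𝒢 (i - 1)] ≤ᵐ[μ] 0 := fun i hi => by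
    have hYint : Integrable (Y i) μ :=
      .of_mem_Icc _ _ ((hY i hi).mono (hle i) le_rfl).aemeasurable (ae_of_all _ (hYB i hi))
    have hXint : Integrable (X i) μ := by
      simpa only [Y, sub_eq_add_neg, integrable_add_const_iff] using hYint
    filter_upwards [condExp_sub_const (hle (i - 1)) hXint (c i), hcond i hi] with ω h1 h2
    simpa [Y, h1] using h2
  have hint : Integrable (fun ω => exp (t * ∑ i ∈ Icc 1 n, Y i ω)) μ :=
    integrable_exp_mul_of_mem_Icc (a := ∑ i ∈ Icc 1 n, ⨅ ω, Y i ω)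
      (b := ∑ i ∈ Icc 1 n, ((⨅ ω, Y i ω) + B i))
      (Finset.measurable_fun_sum _ fun i hi => (hY i hi).mono (hle i) le_rfl).aemeasurable
      (ae_of_all _ fun ω => ⟨sum_le_sum fun i hi => (hYB i hi ω).1,
        sum_le_sum fun i hi => (hYB i hi ω).2⟩)
  calc μ.real {ω | ε ≤ ∑ i ∈ Icc 1 n, Y i ω}
      ≤ exp (-t * ε) * mgf (fun ω => ∑ i ∈ Icc 1 n, Y i ω) μ t :=
        measure_ge_le_exp_mul_mgf ε ht hint
    _ ≤ exp (-t * ε) * exp (t ^ 2 * γ / 8) := by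
        gcongr; exact mgf_sum_le_of_condExp_nonpos h𝒢 hle hY hYB hYcond ht
    _ = exp (-2 * ε ^ 2 / γ) := by
        rw [← exp_add]; congr 1; simp only [t]; field_simp; ring

end Azuma

theorem upper_azuma_general {Ω : Type*} [m : MeasurableSpace Ω]
    (K : Set (Measure Ω)) (hKp : ∀ P ∈ K, IsProbabilityMeasure P)
    (n : ℕ) (X : ℕ → Ω → ℝ) (hmeas : ∀ i, Measurable (X i))
    (B : ℕ → ℝ)
    (hrange : ∀ i ∈ Finset.Icc 1 n, ∀ ω ω', X i ω - X i ω' ≤ B i)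
    (𝒢 : ℕ → MeasurableSpace Ω)
    (h𝒢 : ∀ i, 𝒢 i = ⨆ j ∈ Finset.Icc 1 i, MeasurableSpace.comap (X j) inferInstance)
    (hirr : ∀ P ∈ K, ∀ i ∈ Finset.Icc 1 n,
      ∀ᵐ ω ∂P, (P[X i | 𝒢 (i - 1)]) ω ≤ ⨆ Q ∈ K, ∫ ω', X i ω' ∂Q)
    (γ : ℝ) (hγ : γ = ∑ i ∈ Finset.Icc 1 n, (B i) ^ 2) (hγpos : 0 < γ)
    (ε : ℝ) (hε : 0 < ε) :
    (⨆ P ∈ K,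
        (P {ω | ε ≤ ∑ i ∈ Finset.Icc 1 n, (X i ω - ⨆ Q ∈ K, ∫ ω', X i ω' ∂Q)}).toReal) ≤
      Real.exp (-2 * ε ^ 2 / γ) := by
  have h𝒢mono : Monotone 𝒢 := fun i j hij => by
    rw [h𝒢, h𝒢]; exact biSup_mono fun k hk => Icc_subset_Icc_right hij hk
  have h𝒢le : ∀ i, 𝒢 i ≤ m := fun i => by
    rw [h𝒢]; exact iSup₂_le fun j _ => (hmeas j).comap_le
  have hX𝒢 : ∀ i ∈ Icc 1 n, Measurable[𝒢 i] (X i) := fun i hi => by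
    rw [measurable_iff_comap_le, h𝒢]
    exact le_iSup₂_of_le i (right_mem_Icc.2 (mem_Icc.1 hi).1) le_rfl
  refine Real.iSup_le (fun P => Real.iSup_le (fun hP => ?_) (exp_nonneg _)) (exp_nonneg _)
  have := hKp P hP
  subst hγ
  exact measureReal_sum_sub_ge_le_of_condExp_le h𝒢mono h𝒢le hX𝒢 hrange (hirr P hP) hε.le hγpos

/-- Azuma-type inequality for upper expectations: if for every `P ∈ K` the conditional
expectation of `X_i` given `X_1, …, X_{i-1}` is a.s. at most the upper expectation
`Ē[X_i] = sup_{Q∈K} E_Q[X_i]` (weak irrelevance with disintegrability), and each `X_i`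
has range of length at most `B_i`, then for `γ_n = Σ B_i² > 0` and `ε > 0`,
`P̄(Σ_{i=1}^n (X_i - Ē[X_i]) ≥ ε) ≤ exp (-2ε²/γ_n)`. -/
theorem upper_azuma {Ω : Type*} [m : MeasurableSpace Ω]
    (K : Set (Measure Ω)) (hK : K.Nonempty) (hKp : ∀ P ∈ K, IsProbabilityMeasure P)
    (n : ℕ) (hn : 0 < n) (X : ℕ → Ω → ℝ) (hmeas : ∀ i, Measurable (X i))
    (B : ℕ → ℝ)
    (hrange : ∀ i ∈ Finset.Icc 1 n, ∀ ω ω', X i ω - X i ω' ≤ B i)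
    (𝒢 : ℕ → MeasurableSpace Ω)
    (h𝒢 : ∀ i, 𝒢 i = ⨆ j ∈ Finset.Icc 1 i, MeasurableSpace.comap (X j) inferInstance)
    (hirr : ∀ P ∈ K, ∀ i ∈ Finset.Icc 1 n,
      ∀ᵐ ω ∂P, (P[X i | 𝒢 (i - 1)]) ω ≤ ⨆ Q ∈ K, ∫ ω', X i ω' ∂Q)
    (γ : ℝ) (hγ : γ = ∑ i ∈ Finset.Icc 1 n, (B i) ^ 2) (hγpos : 0 < γ)
    (ε : ℝ) (hε : 0 < ε) :
    (⨆ P ∈ K,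
        (P {ω | ε ≤ ∑ i ∈ Finset.Icc 1 n, (X i ω - ⨆ Q ∈ K, ∫ ω', X i ω' ∂Q)}).toReal) ≤
      Real.exp (-2 * ε ^ 2 / γ) :=
  upper_azuma_general (m := m) K hKp n X hmeas B hrange 𝒢 h𝒢 hirr γ hγ hγpos ε hε
end

section
/- Under the hypotheses of the unbounded weak law (conditional means pinched between E̲[X_i] and Ē[X_i], gap ≤ δ, variances ≤ σ²), for any ε > 0 and any positive integers N > (σ² + δ²)/ε³ and N', every P ∈ K satisfies P( ∀ n ∈ [N, N+N'] : μ̲_n − ε < (1/n)Σ_{i=1}^n X_i < μ̄_n + ε ) > 1 − 2ε. -/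
/-!
Centre the partial sums `S n = X 1 + ⋯ + X n` by their predictable part
`∑ i ≤ n, P[X i | 𝒢 (i-1)]` (Doob decomposition). What is left is a square-integrable martingale
`Y` whose increments have second moment at most `σ²` (law of total variance), while by the
pinching hypothesis the predictable part lies between `∑ i ≤ n, ⨅ Q ∈ K, Q[X i]` and
`∑ i ≤ n, ⨆ Q ∈ K, Q[X i]`. So the average `S n / n` can only leave the band when `|Y n| ≥ n ε`,
and the Hájek–Rényi inequality bounds the probability of this happening for some
`n ∈ [N, N + N']` by `ε⁻² σ² (1/N + ∑_{n > N} 1/n²) ≤ 2 σ² / (N ε²) < 2 ε`.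

The Hájek–Rényi inequality is derived in Chow's form from Doob's maximal inequality: for a
non-negative submartingale `Z` and antitone weights `c ≥ 0`, the process
`c 0 * Z 0 + ∑ k < n, c (k + 1) * (Z (k + 1) - Z k)` is again a submartingale and dominates
`c n * Z n`.
-/

open MeasureTheory ProbabilityTheory Finset Filter
open scoped NNReal ENNReal

namespace MeasureTheory

variable {Ω : Type*} {m0 : MeasurableSpace Ω} {μ : Measure Ω} {ℱ : Filtration ℕ m0}

section Chow

variable {Z : ℕ → Ω → ℝ} {c : ℕ → ℝ}

noncomputable def chowProcess (c : ℕ → ℝ) (Z : ℕ → Ω → ℝ) (n : ℕ) (ω : Ω) : ℝ :=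
  c 0 * Z 0 ω + ∑ k ∈ range n, c (k + 1) * (Z (k + 1) ω - Z k ω)

theorem submartingale_chowProcess [IsFiniteMeasure μ] (hZ : Submartingale Z ℱ μ)
    (hc : Antitone c) (hc0 : ∀ n, 0 ≤ c n) : Submartingale (chowProcess c Z) ℱ μ := by
  have hinit : Martingale (fun _ ω => c 0 * Z 0 ω) ℱ μ :=
    martingale_const_fun ℱ μ ((hZ.stronglyAdapted 0).const_mul _)
      ((hZ.integrable 0).const_mul _)
  have hsum := hZ.sum_mul_sub' (ξ := fun n _ => c n) (fun _ => stronglyMeasurable_const)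
    (fun n _ => hc (Nat.zero_le n)) (fun n _ => hc0 n)
  have hchow : chowProcess c Z =
      (fun n => ∑ k ∈ range n, (fun _ => c (k + 1)) * (Z (k + 1) - Z k)) +
        fun _ ω => c 0 * Z 0 ω := by
    ext n ω
    simp only [chowProcess, Pi.add_apply, Finset.sum_apply, Pi.mul_apply,
      Pi.sub_apply]
    ring
  exact hchow ▸ hsum.add_martingale hinit

theorem mul_le_chowProcess (hZ0 : 0 ≤ Z) (hc : Antitone c) (n : ℕ) (ω : Ω) :
    c n * Z n ω ≤ chowProcess c Z n ω := by
  induction n with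
  | zero => simp [chowProcess]
  | succ n ih =>
    have hmono : c (n + 1) * Z n ω ≤ c n * Z n ω :=
      mul_le_mul_of_nonneg_right (hc n.le_succ) (hZ0 n ω)
    simp only [chowProcess, sum_range_succ] at ih ⊢
    linarith

theorem integral_chowProcess (hZ : ∀ n, Integrable (Z n) μ) (n : ℕ) :
    μ[chowProcess c Z n] = c 0 * μ[Z 0] + ∑ k ∈ range n, c (k + 1) * (μ[Z (k + 1)] - μ[Z k]) := by
  have hincr : ∀ k, Integrable (fun ω => c (k + 1) * (Z (k + 1) ω - Z k ω)) μ := fun k =>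
    ((hZ _).sub (hZ _)).const_mul _
  unfold chowProcess
  rw [integral_add ((hZ 0).const_mul _) (integrable_finsetSum _ fun k _ => hincr k),
    integral_finsetSum _ fun k _ => hincr k, integral_const_mul]
  congr 1
  refine sum_congr rfl fun k _ => ?_
  rw [integral_const_mul, integral_sub (hZ _) (hZ _)]

theorem Submartingale.weighted_maximal_ineq [IsFiniteMeasure μ] (hZ : Submartingale Z ℱ μ)
    (hZ0 : 0 ≤ Z) (hc : Antitone c) (hc0 : ∀ n, 0 ≤ c n) {ε : ℝ} (hε : 0 ≤ ε) (L : ℕ) :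
    ε * μ.real {ω | ∃ n ≤ L, ε ≤ c n * Z n ω} ≤
      c 0 * μ[Z 0] + ∑ k ∈ range L, c (k + 1) * (μ[Z (k + 1)] - μ[Z k]) := by
  set W := chowProcess c Z
  have hW := submartingale_chowProcess hZ hc hc0
  have hW0 : 0 ≤ W := fun n ω =>
    (mul_nonneg (hc0 n) (hZ0 n ω)).trans (mul_le_chowProcess hZ0 hc n ω)
  lift ε to ℝ≥0 using hε
  set S := {ω | (ε : ℝ) ≤ (range (L + 1)).sup' nonempty_range_add_one fun k => W k ω}
  have hsub : {ω | ∃ n ≤ L, (ε : ℝ) ≤ c n * Z n ω} ⊆ S := by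
    rintro ω ⟨n, hnL, hn⟩
    exact hn.trans ((mul_le_chowProcess hZ0 hc n ω).trans
      (le_sup' (fun k => W k ω) (mem_range.2 (Nat.lt_succ_of_le hnL))))
  calc (ε : ℝ) * μ.real {ω | ∃ n ≤ L, (ε : ℝ) ≤ c n * Z n ω}
      ≤ (ε : ℝ) * μ.real S := by gcongr; exact measure_ne_top _ _
    _ = ((ε : ℝ≥0∞) * μ S).toReal := by simp [measureReal_def, ENNReal.toReal_mul]
    _ ≤ ∫ ω in S, W L ω ∂μ :=
        ENNReal.toReal_le_of_le_ofReal (integral_nonneg (hW0 L)) (maximal_ineq hW hW0 L)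
    _ ≤ μ[W L] := setIntegral_le_integral (hW.integrable L) (Eventually.of_forall (hW0 L))
    _ = _ := integral_chowProcess hZ.integrable L

end Chow

section SquareIntegrable

variable [IsFiniteMeasure μ] {Y : ℕ → Ω → ℝ}

theorem Martingale.setIntegral_mul_add_one (hY : Martingale Y ℱ μ) (hY2 : ∀ n, MemLp (Y n) 2 μ)
    (n : ℕ) {s : Set Ω} (hs : MeasurableSet[ℱ n] s) :
    ∫ ω in s, Y n ω * Y (n + 1) ω ∂μ = ∫ ω in s, Y n ω ^ 2 ∂μ := by
  have hprod : Integrable (Y n * Y (n + 1)) μ := (hY2 n).integrable_mul (hY2 (n + 1))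
  have htower := setIntegral_condExp (ℱ.le n) hprod hs
  simp only [Pi.mul_apply] at htower
  rw [← htower]
  refine setIntegral_congr_ae (ℱ.le n s hs) ?_
  filter_upwards [condExp_mul_of_stronglyMeasurable_left (hY.stronglyMeasurable n) hprod
    (hY.integrable _), hY.condExp_ae_eq n.le_succ] with ω hpull hmart _
  rw [hpull, Pi.mul_apply, hmart, sq]

theorem Martingale.setIntegral_sq_add_one (hY : Martingale Y ℱ μ) (hY2 : ∀ n, MemLp (Y n) 2 μ)
    (n : ℕ) {s : Set Ω} (hs : MeasurableSet[ℱ n] s) :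
    ∫ ω in s, Y (n + 1) ω ^ 2 ∂μ =
      ∫ ω in s, Y n ω ^ 2 ∂μ + ∫ ω in s, (Y (n + 1) ω - Y n ω) ^ 2 ∂μ := by
  have hcross := hY.setIntegral_mul_add_one hY2 n hs
  have hsq : ∀ k, IntegrableOn (fun ω => Y k ω ^ 2) s μ := fun k =>
    (hY2 k).integrable_sq.integrableOn
  have hprod : IntegrableOn (fun ω => 2 * (Y n ω * Y (n + 1) ω)) s μ :=
    ((hY2 n).integrable_mul (hY2 (n + 1))).integrableOn.const_mul 2
  have hdiff : IntegrableOn (fun ω => Y (n + 1) ω ^ 2 - 2 * (Y n ω * Y (n + 1) ω)) s μ :=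
    (hsq _).sub hprod
  have hpoly : (fun ω => (Y (n + 1) ω - Y n ω) ^ 2) =
      fun ω => (Y (n + 1) ω ^ 2 - 2 * (Y n ω * Y (n + 1) ω)) + Y n ω ^ 2 := by
    ext ω
    ring
  rw [hpoly, integral_add hdiff (hsq _), integral_sub (hsq _) hprod, integral_const_mul]
  linarith

theorem Martingale.submartingale_sq (hY : Martingale Y ℱ μ) (hY2 : ∀ n, MemLp (Y n) 2 μ) :
    Submartingale (fun n ω => Y n ω ^ 2) ℱ μ :=
  submartingale_of_setIntegral_le_succ (fun n => (hY.stronglyMeasurable n).pow 2)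
    (fun n => (hY2 n).integrable_sq) fun n s hs => by
      rw [hY.setIntegral_sq_add_one hY2 n hs]
      exact le_add_of_nonneg_right (integral_nonneg fun ω => sq_nonneg _)

theorem Martingale.integral_sq_add_one (hY : Martingale Y ℱ μ) (hY2 : ∀ n, MemLp (Y n) 2 μ)
    (n : ℕ) :
    μ[fun ω => Y (n + 1) ω ^ 2] =
      μ[fun ω => Y n ω ^ 2] + μ[fun ω => (Y (n + 1) ω - Y n ω) ^ 2] := by
  simpa using hY.setIntegral_sq_add_one hY2 n MeasurableSet.univ

end SquareIntegrable

theorem memLp_martingalePart {f : ℕ → Ω → ℝ} {p : ℝ≥0∞} (hp : 1 ≤ p)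
    (hf : ∀ n, MemLp (f n) p μ) (n : ℕ) : MemLp (martingalePart f ℱ μ n) p μ :=
  (hf n).sub (memLp_finsetSum' _ fun i _ => ((hf (i + 1)).sub (hf i)).condExp hp)

theorem martingalePart_add_one_sub (f : ℕ → Ω → ℝ) (n : ℕ) :
    martingalePart f ℱ μ (n + 1) - martingalePart f ℱ μ n =
      f (n + 1) - f n - μ[f (n + 1) - f n | ℱ n] := by
  simp only [martingalePart, predictablePart_add_one]
  abel

end MeasureTheory

theorem ProbabilityTheory.integral_sq_sub_condExp_le_variance {Ω : Type*}
    {m m0 : MeasurableSpace Ω} {μ : Measure Ω} [IsProbabilityMeasure μ] (hm : m ≤ m0)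
    {X : Ω → ℝ} (hX : MemLp X 2 μ) : ∫ ω, (X ω - (μ[X | m]) ω) ^ 2 ∂μ ≤ Var[X; μ] := by
  rw [← integral_condVar_add_variance_condExp hm hX, condVar, integral_condExp hm]
  exact le_add_of_nonneg_right (variance_nonneg _ _)

theorem sum_range_inv_sq_max_le {N : ℕ} (hN : 0 < N) (N' : ℕ) :
    ∑ k ∈ range (N + N'), (max ((k + 1 : ℕ) : ℝ) N ^ 2)⁻¹ ≤ 2 / N := by
  have hhead : ∑ k ∈ range N, (max ((k + 1 : ℕ) : ℝ) N ^ 2)⁻¹ = 1 / N := by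
    rw [sum_congr rfl fun k hk => by
      rw [max_eq_right (by exact_mod_cast mem_range.1 hk : ((k + 1 : ℕ) : ℝ) ≤ N)]]
    rw [sum_const, card_range, nsmul_eq_mul]
    field_simp
  have htail : ∑ k ∈ range N', (max ((N + k + 1 : ℕ) : ℝ) N ^ 2)⁻¹ ≤ 1 / N := by
    have hshift : ∑ k ∈ range N', (max ((N + k + 1 : ℕ) : ℝ) N ^ 2)⁻¹ =
        ∑ i ∈ Ioc N (N + N'), ((i : ℝ) ^ 2)⁻¹ := by
      rw [← Ico_add_one_add_one_eq_Ioc, sum_Ico_eq_sum_range, Nat.add_sub_add_right,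
        Nat.add_sub_cancel_left]
      refine sum_congr rfl fun k _ => ?_
      rw [max_eq_left (by exact_mod_cast (by omega : N ≤ N + k + 1)), add_right_comm]
    rw [hshift, one_div]
    exact (sum_Ioc_inv_sq_le_sub hN.ne' (Nat.le_add_right N N')).trans
      (sub_le_self _ (by positivity))
  calc ∑ k ∈ range (N + N'), (max ((k + 1 : ℕ) : ℝ) N ^ 2)⁻¹
      ≤ 1 / N + 1 / N := by rw [sum_range_add, hhead]; gcongr
    _ = 2 / N := by ring

theorem sub_lt_div_and_div_lt_add {a b s y n ε : ℝ} (hn : 0 < n) (ha : a ≤ s - y)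
    (hb : s - y ≤ b) (hy : |y| < n * ε) : a / n - ε < s / n ∧ s / n < b / n + ε := by
  rw [abs_lt] at hy
  constructor
  · rw [div_sub' hn.ne', div_lt_div_iff_of_pos_right hn]
    linarith
  · rw [div_add' _ _ _ hn.ne', div_lt_div_iff_of_pos_right hn]
    linarith

namespace MeasureTheory

variable {Ω : Type*} {m0 : MeasurableSpace Ω} {μ : Measure Ω} {ℱ : Filtration ℕ m0}

theorem one_sub_measureReal_le_of_ae_mem_union [IsProbabilityMeasure μ] {s t : Set Ω}
    (h : ∀ᵐ ω ∂μ, ω ∈ s ∪ t) : 1 - μ.real t ≤ μ.real s := by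
  have hunion : μ.real (s ∪ t) = 1 := by
    rw [measureReal_def, measure_congr (ae_eq_univ.2 h : (s ∪ t : Set Ω) =ᵐ[μ] Set.univ),
      measure_univ, ENNReal.toReal_one]
  linarith [measureReal_union_le (μ := μ) s t]

theorem Martingale.measureReal_exists_mul_le_abs_le [IsFiniteMeasure μ] {Y : ℕ → Ω → ℝ}
    (hY : Martingale Y ℱ μ) (hY2 : ∀ n, MemLp (Y n) 2 μ) (hY0 : Y 0 = 0) {σ2 : ℝ}
    (hincr : ∀ n, μ[fun ω => (Y (n + 1) ω - Y n ω) ^ 2] ≤ σ2) {N : ℕ} (hN : 0 < N) (N' : ℕ)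
    {ε : ℝ} (hε : 0 ≤ ε) :
    ε ^ 2 * μ.real {ω | ∃ n ∈ Icc N (N + N'), n * ε ≤ |Y n ω|} ≤ 2 * σ2 / N := by
  -- The Hájek–Rényi weights `1 / n²`, frozen at `1 / N²` before time `N` so that Chow's
  -- inequality can be started at time `0`.
  set c : ℕ → ℝ := fun n => (max (n : ℝ) N ^ 2)⁻¹ with hc_def
  have hc : Antitone c := fun a b hab => by
    simp only [hc_def]
    gcongr
  have hc0 : ∀ n, 0 ≤ c n := fun n => by positivity
  have hσ2 : 0 ≤ σ2 := (integral_nonneg fun ω => sq_nonneg _).trans (hincr 0)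
  have hsub : {ω | ∃ n ∈ Icc N (N + N'), n * ε ≤ |Y n ω|} ⊆
      {ω | ∃ n ≤ N + N', ε ^ 2 ≤ c n * Y n ω ^ 2} := by
    rintro ω ⟨n, hn, hle⟩
    obtain ⟨hNn, hnL⟩ := mem_Icc.1 hn
    have hn0 : (0 : ℝ) < n := by exact_mod_cast hN.trans_le hNn
    refine ⟨n, hnL, ?_⟩
    simp only [hc_def]
    rw [max_eq_left (by exact_mod_cast hNn), inv_mul_eq_div, le_div_iff₀ (by positivity),
      ← sq_abs (Y n ω), ← mul_pow, mul_comm]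
    gcongr
  calc ε ^ 2 * μ.real {ω | ∃ n ∈ Icc N (N + N'), n * ε ≤ |Y n ω|}
      ≤ ε ^ 2 * μ.real {ω | ∃ n ≤ N + N', ε ^ 2 ≤ c n * Y n ω ^ 2} := by
        gcongr
        exact measure_ne_top _ _
    _ ≤ c 0 * μ[fun ω => Y 0 ω ^ 2] + ∑ k ∈ range (N + N'),
          c (k + 1) * (μ[fun ω => Y (k + 1) ω ^ 2] - μ[fun ω => Y k ω ^ 2]) :=
        (hY.submartingale_sq hY2).weighted_maximal_ineq (fun n ω => sq_nonneg _) hc hc0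
          (sq_nonneg ε) (N + N')
    _ ≤ ∑ k ∈ range (N + N'), c (k + 1) * σ2 := by
        simp only [hY0, Pi.zero_apply, hY.integral_sq_add_one hY2, add_sub_cancel_left]
        rw [zero_pow two_ne_zero, integral_zero, mul_zero, zero_add]
        gcongr with k
        exact hincr k
    _ ≤ 2 * σ2 / N := by
        rw [← sum_mul, mul_comm]
        exact (mul_le_mul_of_nonneg_left (sum_range_inv_sq_max_le hN N') hσ2).trans_eq
          (by ring)

def Filtration.naturalFromOne (X : ℕ → Ω → ℝ) (hX : ∀ i, Measurable (X i)) :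
    Filtration ℕ m0 where
  seq i := ⨆ j ∈ Icc 1 i, MeasurableSpace.comap (X j) inferInstance
  mono' _ _ hab := biSup_mono fun _ hj => Icc_subset_Icc_right hab hj
  le' _ := iSup₂_le fun j _ => (hX j).comap_le

theorem Filtration.measurable_naturalFromOne {X : ℕ → Ω → ℝ} (hX : ∀ i, Measurable (X i))
    {i : ℕ} (hi : 1 ≤ i) : Measurable[Filtration.naturalFromOne X hX i] (X i) :=
  measurable_iff_comap_le.2 <|
    le_iSup₂ (f := fun j (_ : j ∈ Icc 1 i) => MeasurableSpace.comap (X j) inferInstance) i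
      (mem_Icc.2 ⟨hi, le_rfl⟩)

section PartialSums

variable {X : ℕ → Ω → ℝ}

theorem stronglyAdapted_sum_Icc (hX : ∀ i, 1 ≤ i → StronglyMeasurable[ℱ i] (X i)) :
    StronglyAdapted ℱ fun n ω => ∑ i ∈ Icc 1 n, X i ω := fun _ =>
  Finset.stronglyMeasurable_fun_sum _ fun i hi =>
    (hX i (mem_Icc.1 hi).1).mono (ℱ.mono (mem_Icc.1 hi).2)

theorem sum_Icc_add_one_sub_sum_Icc (X : ℕ → Ω → ℝ) (n : ℕ) :
    (fun ω => ∑ i ∈ Icc 1 (n + 1), X i ω) - (fun ω => ∑ i ∈ Icc 1 n, X i ω) = X (n + 1) := by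
  ext ω
  simp [sum_Icc_succ_top (Nat.le_add_left 1 n)]

theorem martingalePart_sum_Icc_add_one_sub (n : ℕ) :
    martingalePart (fun n ω => ∑ i ∈ Icc 1 n, X i ω) ℱ μ (n + 1) -
        martingalePart (fun n ω => ∑ i ∈ Icc 1 n, X i ω) ℱ μ n =
      X (n + 1) - μ[X (n + 1) | ℱ n] := by
  rw [martingalePart_add_one_sub, sum_Icc_add_one_sub_sum_Icc]

theorem predictablePart_sum_Icc (n : ℕ) :
    predictablePart (fun n ω => ∑ i ∈ Icc 1 n, X i ω) ℱ μ n =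
      ∑ i ∈ Icc 1 n, μ[X i | ℱ (i - 1)] := by
  induction n with
  | zero => simp
  | succ n ih =>
    rw [predictablePart_add_one, ih, sum_Icc_succ_top (Nat.le_add_left 1 n), Nat.add_sub_cancel,
      sum_Icc_add_one_sub_sum_Icc]

theorem integral_sq_martingalePart_sum_Icc_add_one_sub_le [IsProbabilityMeasure μ] (n : ℕ)
    (hX : MemLp (X (n + 1)) 2 μ) :
    ∫ ω, (martingalePart (fun n ω => ∑ i ∈ Icc 1 n, X i ω) ℱ μ (n + 1) ω -
      martingalePart (fun n ω => ∑ i ∈ Icc 1 n, X i ω) ℱ μ n ω) ^ 2 ∂μ ≤ Var[X (n + 1); μ] := by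
  have hincr := congrFun (martingalePart_sum_Icc_add_one_sub (ℱ := ℱ) (μ := μ) (X := X) n)
  simp only [Pi.sub_apply] at hincr
  simp only [hincr]
  exact integral_sq_sub_condExp_le_variance (ℱ.le n) hX

theorem ae_sum_le_predictablePart_sum_Icc_le {lo hi : ℕ → ℝ}
    (hX : ∀ i, 1 ≤ i →
      ∀ᵐ ω ∂μ, lo i ≤ (μ[X i | ℱ (i - 1)]) ω ∧ (μ[X i | ℱ (i - 1)]) ω ≤ hi i) :
    ∀ᵐ ω ∂μ, ∀ n,
      ∑ i ∈ Icc 1 n, lo i ≤ predictablePart (fun n ω => ∑ i ∈ Icc 1 n, X i ω) ℱ μ n ω ∧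
        predictablePart (fun n ω => ∑ i ∈ Icc 1 n, X i ω) ℱ μ n ω ≤ ∑ i ∈ Icc 1 n, hi i := by
  have hall : ∀ᵐ ω ∂μ, ∀ i, 1 ≤ i →
      lo i ≤ (μ[X i | ℱ (i - 1)]) ω ∧ (μ[X i | ℱ (i - 1)]) ω ≤ hi i :=
    ae_all_iff.2 fun i => by
      by_cases h : 1 ≤ i
      · filter_upwards [hX i h] with ω hω using fun _ => hω
      · exact Eventually.of_forall fun _ h' => absurd h' h
  filter_upwards [hall] with ω hω n
  rw [predictablePart_sum_Icc, Finset.sum_apply]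
  exact ⟨sum_le_sum fun i hi => (hω i (mem_Icc.1 hi).1).1,
    sum_le_sum fun i hi => (hω i (mem_Icc.1 hi).1).2⟩

theorem ae_averages_within_or_exists_le_abs_martingalePart {lo hi : ℕ → ℝ}
    (hX : ∀ i, 1 ≤ i →
      ∀ᵐ ω ∂μ, lo i ≤ (μ[X i | ℱ (i - 1)]) ω ∧ (μ[X i | ℱ (i - 1)]) ω ≤ hi i)
    {N : ℕ} (hN : 0 < N) (L : ℕ) (ε : ℝ) :
    ∀ᵐ ω ∂μ, ω ∈ {ω | ∀ n ∈ Icc N L,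
        (∑ i ∈ Icc 1 n, lo i) / n - ε < (∑ i ∈ Icc 1 n, X i ω) / n ∧
          (∑ i ∈ Icc 1 n, X i ω) / n < (∑ i ∈ Icc 1 n, hi i) / n + ε} ∪
      {ω | ∃ n ∈ Icc N L,
        n * ε ≤ |martingalePart (fun n ω => ∑ i ∈ Icc 1 n, X i ω) ℱ μ n ω|} := by
  filter_upwards [ae_sum_le_predictablePart_sum_Icc_le hX] with ω hω
  by_cases hlarge : ω ∈ {ω | ∃ n ∈ Icc N L,
      n * ε ≤ |martingalePart (fun n ω => ∑ i ∈ Icc 1 n, X i ω) ℱ μ n ω|}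
  · exact Or.inr hlarge
  refine Or.inl fun n hn => ?_
  have hsmall := not_le.1 fun h => hlarge ⟨n, hn, h⟩
  have hpred : ∑ i ∈ Icc 1 n, X i ω -
      martingalePart (fun n ω => ∑ i ∈ Icc 1 n, X i ω) ℱ μ n ω =
        predictablePart (fun n ω => ∑ i ∈ Icc 1 n, X i ω) ℱ μ n ω :=
    sub_sub_cancel _ _
  exact sub_lt_div_and_div_lt_add (by exact_mod_cast hN.trans_le (mem_Icc.1 hn).1)
    (hpred ▸ (hω n).1) (hpred ▸ (hω n).2) hsmall

end PartialSums

end MeasureTheory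

open MeasureTheory in
theorem unbounded_finitary_strong_law_general {Ω : Type*} [m : MeasurableSpace Ω]
    (K : Set (Measure Ω)) (hKp : ∀ P ∈ K, IsProbabilityMeasure P)
    (X : ℕ → Ω → ℝ) (hmeas : ∀ i, Measurable (X i))
    (hL2 : ∀ P ∈ K, ∀ i, MemLp (X i) 2 P)
    (𝒢 : ℕ → MeasurableSpace Ω)
    (h𝒢 : ∀ i, 𝒢 i = ⨆ j ∈ Finset.Icc 1 i, MeasurableSpace.comap (X j) inferInstance)
    (σ2 δ : ℝ)
    (hvar : ∀ P ∈ K, ∀ i, 1 ≤ i → ∫ ω, (X i ω - ∫ ω', X i ω' ∂P) ^ 2 ∂P ≤ σ2)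
    (hirr : ∀ P ∈ K, ∀ i, 1 ≤ i →
      ∀ᵐ ω ∂P, (⨅ Q ∈ K, ∫ ω', X i ω' ∂Q) ≤ (P[X i | 𝒢 (i - 1)]) ω ∧
        (P[X i | 𝒢 (i - 1)]) ω ≤ ⨆ Q ∈ K, ∫ ω', X i ω' ∂Q)
    (ε : ℝ) (hε : 0 < ε)
    (N N' : ℕ) (hN : 0 < N) (hNbig : (σ2 + δ ^ 2) / ε ^ 3 < (N : ℝ)) :
    ∀ P ∈ K,
      1 - 2 * ε <
        (P {ω | ∀ n ∈ Finset.Icc N (N + N'),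
          (∑ i ∈ Finset.Icc 1 n, ⨅ Q ∈ K, ∫ ω', X i ω' ∂Q) / n - ε <
              (∑ i ∈ Finset.Icc 1 n, X i ω) / n ∧
            (∑ i ∈ Finset.Icc 1 n, X i ω) / n <
              (∑ i ∈ Finset.Icc 1 n, ⨆ Q ∈ K, ∫ ω', X i ω' ∂Q) / n + ε}).toReal := by
  intro P hP
  have := hKp P hP
  set ℱ := Filtration.naturalFromOne X hmeas
  obtain rfl : 𝒢 = ℱ := funext h𝒢
  set Y := martingalePart (fun n ω => ∑ i ∈ Icc 1 n, X i ω) ℱ P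
  have hS2 : ∀ n, MemLp (fun ω => ∑ i ∈ Icc 1 n, X i ω) 2 P := fun n =>
    memLp_finsetSum _ fun i _ => hL2 P hP i
  have hY : Martingale Y ℱ P := martingale_martingalePart
    (stronglyAdapted_sum_Icc fun _ hi =>
      (Filtration.measurable_naturalFromOne hmeas hi).stronglyMeasurable)
    fun n => (hS2 n).integrable one_le_two
  have hincr : ∀ n, P[fun ω => (Y (n + 1) ω - Y n ω) ^ 2] ≤ σ2 := fun n =>
    (integral_sq_martingalePart_sum_Icc_add_one_sub_le n (hL2 P hP _)).trans
      ((variance_eq_integral (hmeas _).aemeasurable).trans_le (hvar P hP _ n.succ_pos))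
  have hlarge : P.real {ω | ∃ n ∈ Icc N (N + N'), n * ε ≤ |Y n ω|} < 2 * ε := by
    refine lt_of_mul_lt_mul_left (((hY.measureReal_exists_mul_le_abs_le
      (memLp_martingalePart one_le_two hS2) (funext fun ω => by simp [Y]) hincr hN N'
      hε.le)).trans_lt ?_) (sq_nonneg ε)
    rw [div_lt_iff₀ (by exact_mod_cast hN)]
    rw [div_lt_iff₀ (by positivity)] at hNbig
    nlinarith [sq_nonneg δ]
  refine lt_of_lt_of_le (by linarith) (one_sub_measureReal_le_of_ae_mem_union ?_)
  exact ae_averages_within_or_exists_le_abs_martingalePart (hirr P hP) hN (N + N') ε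

/-- Finitary strong law for (possibly unbounded) variables: under the pinched-conditional-mean
hypotheses with gap `δ` and variances at most `σ²`, for positive integers `N > (σ²+δ²)/ε³`
and `N'`, every `P ∈ K` satisfies
`P( ∀ n ∈ [N, N+N'], μ̲_n - ε < (1/n) Σ_{i=1}^n X_i < μ̄_n + ε ) > 1 - 2ε`. -/
theorem unbounded_finitary_strong_law {Ω : Type*} [m : MeasurableSpace Ω]
    (K : Set (Measure Ω)) (hK : K.Nonempty) (hKp : ∀ P ∈ K, IsProbabilityMeasure P)
    (X : ℕ → Ω → ℝ) (hmeas : ∀ i, Measurable (X i))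
    (hL2 : ∀ P ∈ K, ∀ i, MemLp (X i) 2 P)
    (𝒢 : ℕ → MeasurableSpace Ω)
    (h𝒢 : ∀ i, 𝒢 i = ⨆ j ∈ Finset.Icc 1 i, MeasurableSpace.comap (X j) inferInstance)
    (σ2 δ : ℝ)
    (hvar : ∀ P ∈ K, ∀ i, 1 ≤ i → ∫ ω, (X i ω - ∫ ω', X i ω' ∂P) ^ 2 ∂P ≤ σ2)
    (hgap : ∀ i, 1 ≤ i →
      (⨆ Q ∈ K, ∫ ω', X i ω' ∂Q) - (⨅ Q ∈ K, ∫ ω', X i ω' ∂Q) ≤ δ)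
    (hirr : ∀ P ∈ K, ∀ i, 1 ≤ i →
      ∀ᵐ ω ∂P, (⨅ Q ∈ K, ∫ ω', X i ω' ∂Q) ≤ (P[X i | 𝒢 (i - 1)]) ω ∧
        (P[X i | 𝒢 (i - 1)]) ω ≤ ⨆ Q ∈ K, ∫ ω', X i ω' ∂Q)
    (ε : ℝ) (hε : 0 < ε)
    (N N' : ℕ) (hN : 0 < N) (hN' : 0 < N') (hNbig : (σ2 + δ ^ 2) / ε ^ 3 < (N : ℝ)) :
    ∀ P ∈ K,
      1 - 2 * ε <
        (P {ω | ∀ n ∈ Finset.Icc N (N + N'),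
          (∑ i ∈ Finset.Icc 1 n, ⨅ Q ∈ K, ∫ ω', X i ω' ∂Q) / n - ε <
              (∑ i ∈ Finset.Icc 1 n, X i ω) / n ∧
            (∑ i ∈ Finset.Icc 1 n, X i ω) / n <
              (∑ i ∈ Finset.Icc 1 n, ⨆ Q ∈ K, ∫ ω', X i ω' ∂Q) / n + ε}).toReal :=
  unbounded_finitary_strong_law_general (m := m) K hKp X hmeas hL2 𝒢 h𝒢 σ2 δ hvar hirr ε hε N N' hN
    hNbig
end

section
/- Under the hypotheses of the unbounded law (infinitely many variables X_1, X_2, … with conditional means pinched in [E̲[X_i], Ē[X_i]], gap ≤ δ, variances ≤ σ²), for every P ∈ K: P( limsup_{n→∞} ( (1/n)Σ_{i=1}^n X_i − μ̄_n ) ≤ 0 ) = 1 and P( liminf_{n→∞} ( (1/n)Σ_{i=1}^n X_i − μ̲_n ) ≥ 0 ) = 1. -/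
/-!
Fix `P ∈ K` and let `mᵢ = P[Xᵢ | X₁, …, Xᵢ₋₁]`. The innovations `dᵢ = Xᵢ - mᵢ` are martingale
differences, and since the conditional expectation is the best `L²` predictor,
`E dᵢ² ≤ Var Xᵢ ≤ σ²`. Increments of a martingale are orthogonal, so `Σᵢ dᵢ / i` is a martingale
bounded in `L²` (as `Σ 1 / i² < ∞`) and converges almost surely; Kronecker's lemma then gives
`(1/n) Σᵢ dᵢ → 0` almost surely. Finally the pinching `μ̲ᵢ ≤ mᵢ ≤ μ̄ᵢ` yields
`(1/n) Σ Xᵢ - μ̄ₙ ≤ (1/n) Σ dᵢ ≤ (1/n) Σ Xᵢ - μ̲ₙ`.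
-/

open MeasureTheory Filter Finset Topology

theorem Filter.Tendsto.kronecker {a : ℕ → ℝ} {c : ℝ}
    (h : Tendsto (fun n : ℕ => ∑ i ∈ Icc 1 n, a i / i) atTop (𝓝 c)) :
    Tendsto (fun n : ℕ => (∑ i ∈ Icc 1 n, a i) / n) atTop (𝓝 0) := by
  set b : ℕ → ℝ := fun n => ∑ i ∈ Icc 1 n, a i / i
  -- summation by parts, then Cesàro
  have hparts (n : ℕ) : ∑ i ∈ Icc 1 n, a i = n * b n - ∑ i ∈ range n, b i := by
    induction n with
    | zero => simp
    | succ n ih =>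
      have hb : b (n + 1) = b n + a (n + 1) / (n + 1 : ℕ) :=
        sum_Icc_succ_top (Nat.le_add_left 1 n) _
      rw [sum_Icc_succ_top (Nat.le_add_left 1 n), ih, sum_range_succ, hb]
      push_cast
      field_simp
      ring
  have hdiff : Tendsto (fun n : ℕ => b n - (n : ℝ)⁻¹ • ∑ i ∈ range n, b i) atTop (𝓝 0) := by
    simpa using h.sub h.cesaro
  refine hdiff.congr' ?_
  filter_upwards [eventually_ne_atTop 0] with n hn
  rw [hparts n, smul_eq_mul]
  field_simp

theorem Real.limsup_nonpos_of_le_of_tendsto_zero {ι : Type*} {l : Filter ι} [l.NeBot]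
    {x u : ι → ℝ} (hle : x ≤ᶠ[l] u) (hu : Tendsto u l (𝓝 0)) : limsup x l ≤ 0 := by
  by_cases hx : IsCoboundedUnder (· ≤ ·) l x
  · exact (limsup_le_limsup hle hx hu.isBoundedUnder_le).trans_eq hu.limsup_eq
  · -- `x` is unbounded below, so its real `limsup` is the junk value `0`
    rw [Real.limsup_of_not_isCoboundedUnder hx]

theorem Real.liminf_nonneg_of_le_of_tendsto_zero {ι : Type*} {l : Filter ι} [l.NeBot]
    {x u : ι → ℝ} (hle : u ≤ᶠ[l] x) (hu : Tendsto u l (𝓝 0)) : 0 ≤ liminf x l := by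
  by_cases hx : IsCoboundedUnder (· ≥ ·) l x
  · exact hu.liminf_eq.symm.trans_le (liminf_le_liminf hle hu.isBoundedUnder_ge hx)
  · rw [Real.liminf_of_not_isCoboundedUnder hx]

theorem limsup_sum_div_sub_sum_div_nonpos {x y b : ℕ → ℝ} (hyb : ∀ i, 1 ≤ i → y i ≤ b i)
    (h : Tendsto (fun n : ℕ => (∑ i ∈ Icc 1 n, (x i - y i)) / n) atTop (𝓝 0)) :
    limsup (fun n : ℕ => (∑ i ∈ Icc 1 n, x i) / n - (∑ i ∈ Icc 1 n, b i) / n) atTop ≤ 0 := by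
  refine Real.limsup_nonpos_of_le_of_tendsto_zero (Eventually.of_forall fun n => ?_) h
  dsimp only
  rw [← sub_div, ← sum_sub_distrib]
  gcongr with i hi
  exact hyb i (mem_Icc.1 hi).1

theorem liminf_sum_div_sub_sum_div_nonneg {x y a : ℕ → ℝ} (hay : ∀ i, 1 ≤ i → a i ≤ y i)
    (h : Tendsto (fun n : ℕ => (∑ i ∈ Icc 1 n, (x i - y i)) / n) atTop (𝓝 0)) :
    0 ≤ liminf (fun n : ℕ => (∑ i ∈ Icc 1 n, x i) / n - (∑ i ∈ Icc 1 n, a i) / n) atTop := by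
  refine Real.liminf_nonneg_of_le_of_tendsto_zero (Eventually.of_forall fun n => ?_) h
  dsimp only
  rw [← sub_div, ← sum_sub_distrib]
  gcongr with i hi
  exact hay i (mem_Icc.1 hi).1

section ConditionalExpectation

variable {Ω : Type*} {m m0 : MeasurableSpace Ω} {μ : Measure Ω} [IsFiniteMeasure μ] {f g : Ω → ℝ}

theorem integral_mul_eq_zero_of_condExp_eq_zero (hm : m ≤ m0) (hf : StronglyMeasurable[m] f)
    (hf2 : MemLp f 2 μ) (hg2 : MemLp g 2 μ) (hg : μ[g|m] =ᵐ[μ] 0) :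
    ∫ x, f x * g x ∂μ = 0 := by
  have hfg : Integrable (f * g) μ := hf2.integrable_mul hg2
  calc ∫ x, f x * g x ∂μ = ∫ x, (μ[f * g|m]) x ∂μ := (integral_condExp hm).symm
    _ = ∫ x, (f * μ[g|m]) x ∂μ := integral_congr_ae
        (condExp_mul_of_stronglyMeasurable_left hf hfg (hg2.integrable one_le_two))
    _ = ∫ _, (0 : ℝ) ∂μ := integral_congr_ae (hg.mono fun x hx => by simp [hx])
    _ = 0 := integral_zero Ω ℝ

theorem integral_add_sq_of_condExp_eq_zero (hm : m ≤ m0) (hf : StronglyMeasurable[m] f)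
    (hf2 : MemLp f 2 μ) (hg2 : MemLp g 2 μ) (hg : μ[g|m] =ᵐ[μ] 0) :
    ∫ x, (f x + g x) ^ 2 ∂μ = ∫ x, f x ^ 2 ∂μ + ∫ x, g x ^ 2 ∂μ := by
  have hcross : Integrable (fun x => 2 * (f x * g x)) μ :=
    (hf2.integrable_mul hg2).const_mul 2
  calc ∫ x, (f x + g x) ^ 2 ∂μ = ∫ x, (f x ^ 2 + 2 * (f x * g x) + g x ^ 2) ∂μ := by
        congr 1 with x; ring
    _ = ∫ x, f x ^ 2 ∂μ + ∫ x, g x ^ 2 ∂μ := by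
        rw [integral_add (f := fun x => f x ^ 2 + 2 * (f x * g x))
            (hf2.integrable_sq.add hcross) hg2.integrable_sq,
          integral_add hf2.integrable_sq hcross, integral_const_mul,
          integral_mul_eq_zero_of_condExp_eq_zero hm hf hf2 hg2 hg, mul_zero, add_zero]

theorem condExp_sub_condExp_ae_eq_zero (hm : m ≤ m0) (hf : Integrable f μ) :
    μ[f - μ[f|m]|m] =ᵐ[μ] 0 := by
  have h := condExp_sub hf (integrable_condExp (m := m) (μ := μ) (f := f)) m
  rwa [condExp_of_stronglyMeasurable hm stronglyMeasurable_condExp integrable_condExp,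
    sub_self] at h

theorem integral_sub_condExp_sq_le (hm : m ≤ m0) (hf : MemLp f 2 μ) (c : ℝ) :
    ∫ x, (f x - (μ[f|m]) x) ^ 2 ∂μ ≤ ∫ x, (f x - c) ^ 2 ∂μ := by
  have hcf : MemLp (μ[f|m]) 2 μ := hf.condExp one_le_two
  have hsplit := integral_add_sq_of_condExp_eq_zero hm
    (stronglyMeasurable_condExp.sub stronglyMeasurable_const) (hcf.sub (memLp_const c))
    (hf.sub hcf) (condExp_sub_condExp_ae_eq_zero hm (hf.integrable one_le_two))
  simp only [Pi.sub_apply, sub_add_sub_cancel'] at hsplit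
  rw [hsplit]
  exact le_add_of_nonneg_left (integral_nonneg fun x => sq_nonneg _)

end ConditionalExpectation

theorem MeasureTheory.Martingale.ae_exists_tendsto_of_integral_sq_le {Ω : Type*}
    {m0 : MeasurableSpace Ω} {μ : Measure Ω} [IsProbabilityMeasure μ] {ℱ : Filtration ℕ m0}
    {M : ℕ → Ω → ℝ}
    (hM : Martingale M ℱ μ) (hL2 : ∀ n, MemLp (M n) 2 μ) {C : ℝ}
    (hC : ∀ n, ∫ ω, M n ω ^ 2 ∂μ ≤ C) :
    ∀ᵐ ω ∂μ, ∃ c, Tendsto (fun n => M n ω) atTop (𝓝 c) := by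
  refine hM.submartingale.exists_ae_tendsto_of_bdd (R := (1 + C).toNNReal) fun n => ?_
  rw [eLpNorm_one_eq_lintegral_enorm,
    ← ofReal_integral_norm_eq_lintegral_enorm ((hL2 n).integrable one_le_two)]
  refine ENNReal.ofReal_le_ofReal ?_
  calc ∫ ω, ‖M n ω‖ ∂μ ≤ ∫ ω, (1 + M n ω ^ 2) ∂μ :=
        integral_mono ((hL2 n).integrable one_le_two).norm
          ((integrable_const 1).add (hL2 n).integrable_sq) fun ω => by
            simp only [Real.norm_eq_abs]
            nlinarith [sq_abs (M n ω), sq_nonneg (|M n ω| - 1)]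
    _ ≤ 1 + C := by
        rw [integral_add (integrable_const 1) (hL2 n).integrable_sq, integral_const,
          probReal_univ, one_smul]
        linarith [hC n]

section MartingaleDifferences

variable {Ω : Type*} {m0 : MeasurableSpace Ω} {μ : Measure Ω} {ℱ : Filtration ℕ m0}
  {Y : ℕ → Ω → ℝ}

theorem stronglyAdapted_sum_Icc (hY : ∀ n, StronglyMeasurable[ℱ (n + 1)] (Y (n + 1))) :
    StronglyAdapted ℱ fun n ω => ∑ i ∈ Icc 1 n, Y i ω := fun n =>
  Finset.stronglyMeasurable_fun_sum _ fun i hi => by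
    obtain ⟨j, rfl⟩ : ∃ j, i = j + 1 := ⟨i - 1, by grind⟩
    exact (hY j).mono (ℱ.mono (mem_Icc.1 hi).2)

theorem sum_Icc_succ_sub_sum_Icc (n : ℕ) :
    ((fun ω => ∑ i ∈ Icc 1 (n + 1), Y i ω) - fun ω => ∑ i ∈ Icc 1 n, Y i ω) = Y (n + 1) := by
  ext ω
  simp [sum_Icc_succ_top (Nat.le_add_left 1 n)]

variable [IsFiniteMeasure μ]

theorem martingale_sum_Icc (hY : ∀ n, StronglyMeasurable[ℱ (n + 1)] (Y (n + 1)))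
    (hint : ∀ n, Integrable (Y n) μ) (hY0 : ∀ n, μ[Y (n + 1)|ℱ n] =ᵐ[μ] 0) :
    Martingale (fun n ω => ∑ i ∈ Icc 1 n, Y i ω) ℱ μ :=
  martingale_of_condExp_sub_eq_zero_nat (stronglyAdapted_sum_Icc hY)
    (fun n => integrable_finsetSum _ fun i _ => hint i)
    fun n => by simpa only [sum_Icc_succ_sub_sum_Icc] using hY0 n

theorem integral_sq_sum_Icc (hY : ∀ n, StronglyMeasurable[ℱ (n + 1)] (Y (n + 1)))
    (hL2 : ∀ n, MemLp (Y n) 2 μ) (hY0 : ∀ n, μ[Y (n + 1)|ℱ n] =ᵐ[μ] 0) (n : ℕ) :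
    ∫ ω, (∑ i ∈ Icc 1 n, Y i ω) ^ 2 ∂μ = ∑ i ∈ Icc 1 n, ∫ ω, Y i ω ^ 2 ∂μ := by
  induction n with
  | zero => simp
  | succ n ih =>
    simp only [sum_Icc_succ_top (Nat.le_add_left 1 n)]
    rw [integral_add_sq_of_condExp_eq_zero (ℱ.le n) (stronglyAdapted_sum_Icc hY n)
      (memLp_finsetSum _ fun i _ => hL2 i) (hL2 _) (hY0 n), ih]

theorem ae_exists_tendsto_sum_Icc [IsProbabilityMeasure μ]
    (hY : ∀ n, StronglyMeasurable[ℱ (n + 1)] (Y (n + 1)))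
    (hL2 : ∀ n, MemLp (Y n) 2 μ) (hY0 : ∀ n, μ[Y (n + 1)|ℱ n] =ᵐ[μ] 0) {C : ℝ}
    (hC : ∀ n, ∑ i ∈ Icc 1 n, ∫ ω, Y i ω ^ 2 ∂μ ≤ C) :
    ∀ᵐ ω ∂μ, ∃ c, Tendsto (fun n => ∑ i ∈ Icc 1 n, Y i ω) atTop (𝓝 c) :=
  (martingale_sum_Icc hY (fun n => (hL2 n).integrable one_le_two) hY0
    ).ae_exists_tendsto_of_integral_sq_le (fun _ => memLp_finsetSum _ fun i _ => hL2 i)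
    fun n => (integral_sq_sum_Icc hY hL2 hY0 n).trans_le (hC n)

end MartingaleDifferences

theorem ae_tendsto_sum_sub_condExp_div_zero {Ω : Type*} {m0 : MeasurableSpace Ω}
    {μ : Measure Ω} [IsProbabilityMeasure μ] (ℱ : Filtration ℕ m0) {X : ℕ → Ω → ℝ}
    (hX : ∀ n, StronglyMeasurable[ℱ (n + 1)] (X (n + 1))) (hL2 : ∀ i, MemLp (X i) 2 μ)
    {σ2 : ℝ} (hvar : ∀ i, 1 ≤ i → ∫ ω, (X i ω - ∫ ω', X i ω' ∂μ) ^ 2 ∂μ ≤ σ2) :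
    ∀ᵐ ω ∂μ, Tendsto (fun n : ℕ => (∑ i ∈ Icc 1 n, (X i ω - (μ[X i|ℱ (i - 1)]) ω)) / n)
      atTop (𝓝 0) := by
  set d : ℕ → Ω → ℝ := fun i => X i - μ[X i|ℱ (i - 1)]
  set Y : ℕ → Ω → ℝ := fun i ω => d i ω / i
  have hY2 (i : ℕ) : MemLp (Y i) 2 μ := by
    simpa only [Y, div_eq_mul_inv] using
      ((hL2 i).sub ((hL2 i).condExp one_le_two)).mul_const (i : ℝ)⁻¹
  have hYm (n : ℕ) : StronglyMeasurable[ℱ (n + 1)] (Y (n + 1)) := by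
    simpa only [Y, d, div_eq_mul_inv, Nat.add_sub_cancel] using
      ((hX n).sub (stronglyMeasurable_condExp.mono (ℱ.mono n.le_succ))).mul_const _
  have hY0 (n : ℕ) : μ[Y (n + 1)|ℱ n] =ᵐ[μ] 0 := by
    have hsmul : Y (n + 1) = ((n + 1 : ℕ) : ℝ)⁻¹ • d (n + 1) := by
      ext ω
      simp [Y, div_eq_inv_mul]
    rw [hsmul]
    refine (condExp_smul _ _ _).trans ?_
    filter_upwards [condExp_sub_condExp_ae_eq_zero (ℱ.le n)
      ((hL2 (n + 1)).integrable one_le_two)] with ω hω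
    simp [d, hω]
  have hYvar (i : ℕ) (hi : 1 ≤ i) : ∫ ω, Y i ω ^ 2 ∂μ ≤ σ2 * (1 / (i : ℝ) ^ 2) := by
    simp only [Y, div_pow, integral_div, mul_one_div]
    gcongr
    exact (integral_sub_condExp_sq_le (ℱ.le _) (hL2 i) _).trans (hvar i hi)
  have hσ2 : 0 ≤ σ2 := (integral_nonneg fun _ => sq_nonneg _).trans (hvar 1 le_rfl)
  have hC (n : ℕ) : ∑ i ∈ Icc 1 n, ∫ ω, Y i ω ^ 2 ∂μ ≤ σ2 * ∑' i : ℕ, 1 / (i : ℝ) ^ 2 :=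
    calc ∑ i ∈ Icc 1 n, ∫ ω, Y i ω ^ 2 ∂μ ≤ σ2 * ∑ i ∈ Icc 1 n, 1 / (i : ℝ) ^ 2 := by
          rw [mul_sum]
          exact sum_le_sum fun i hi => hYvar i (mem_Icc.1 hi).1
      _ ≤ σ2 * ∑' i : ℕ, 1 / (i : ℝ) ^ 2 := by
          gcongr
          exact Summable.sum_le_tsum _ (fun i _ => by positivity)
            (Real.summable_one_div_nat_pow.mpr one_lt_two)
  filter_upwards [ae_exists_tendsto_sum_Icc hYm hY2 hY0 hC] with ω ⟨c, hc⟩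
  exact hc.kronecker

/-- `σ(X₁, …, Xₙ)`, trivial at `n = 0`. -/
def MeasureTheory.Filtration.naturalFromOne_s15 {Ω : Type*} {m0 : MeasurableSpace Ω}
    (X : ℕ → Ω → ℝ) (hX : ∀ i, Measurable (X i)) : Filtration ℕ m0 where
  seq n := ⨆ j ∈ Icc 1 n, MeasurableSpace.comap (X j) inferInstance
  mono' _ _ hab := biSup_mono fun _ hj => Icc_subset_Icc_right hab hj
  le' _ := iSup₂_le fun j _ => (hX j).comap_le

theorem MeasureTheory.Filtration.stronglyMeasurable_naturalFromOne {Ω : Type*}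
    [MeasurableSpace Ω] {X : ℕ → Ω → ℝ} (hX : ∀ i, Measurable (X i)) (n : ℕ) :
    StronglyMeasurable[naturalFromOne_s15 X hX (n + 1)] (X (n + 1)) :=
  ((comap_measurable (X (n + 1))).mono
    (le_iSup₂ (f := fun j (_ : j ∈ Icc 1 (n + 1)) => MeasurableSpace.comap (X j) inferInstance)
      (n + 1) (by simp)) le_rfl).stronglyMeasurable

theorem measure_setOf_eq_one_of_ae {α : Type*} [MeasurableSpace α] {μ : Measure α}
    [IsProbabilityMeasure μ] {p : α → Prop} (h : ∀ᵐ x ∂μ, p x) : μ {x | p x} = 1 :=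
  (measure_congr (ae_eq_univ.2 (mem_ae_iff.1 h))).trans measure_univ

theorem unbounded_almost_sure_law_general {Ω : Type*} [m : MeasurableSpace Ω]
    (K : Set (Measure Ω)) (hKp : ∀ P ∈ K, IsProbabilityMeasure P)
    (X : ℕ → Ω → ℝ) (hmeas : ∀ i, Measurable (X i))
    (hL2 : ∀ P ∈ K, ∀ i, MemLp (X i) 2 P)
    (𝒢 : ℕ → MeasurableSpace Ω)
    (h𝒢 : ∀ i, 𝒢 i = ⨆ j ∈ Finset.Icc 1 i, MeasurableSpace.comap (X j) inferInstance)
    (σ2 : ℝ)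
    (hvar : ∀ P ∈ K, ∀ i, 1 ≤ i → ∫ ω, (X i ω - ∫ ω', X i ω' ∂P) ^ 2 ∂P ≤ σ2)
    (hirr : ∀ P ∈ K, ∀ i, 1 ≤ i →
      ∀ᵐ ω ∂P, (⨅ Q ∈ K, ∫ ω', X i ω' ∂Q) ≤ (P[X i | 𝒢 (i - 1)]) ω ∧
        (P[X i | 𝒢 (i - 1)]) ω ≤ ⨆ Q ∈ K, ∫ ω', X i ω' ∂Q) :
    ∀ P ∈ K,
      P {ω | Filter.limsup
          (fun n : ℕ => (∑ i ∈ Finset.Icc 1 n, X i ω) / n -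
            (∑ i ∈ Finset.Icc 1 n, ⨆ Q ∈ K, ∫ ω', X i ω' ∂Q) / n) Filter.atTop ≤ 0} = 1 ∧
      P {ω | 0 ≤ Filter.liminf
          (fun n : ℕ => (∑ i ∈ Finset.Icc 1 n, X i ω) / n -
            (∑ i ∈ Finset.Icc 1 n, ⨅ Q ∈ K, ∫ ω', X i ω' ∂Q) / n) Filter.atTop} = 1 := by
  intro P hP
  have := hKp P hP
  obtain rfl : 𝒢 = Filtration.naturalFromOne_s15 X hmeas := funext h𝒢
  have hlaw := ae_tendsto_sum_sub_condExp_div_zero _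
    (Filtration.stronglyMeasurable_naturalFromOne hmeas) (hL2 P hP) (hvar P hP)
  have hpinch := ae_all_iff.2 fun i => eventually_imp_distrib_left.2 (hirr P hP i)
  refine ⟨measure_setOf_eq_one_of_ae ?_, measure_setOf_eq_one_of_ae ?_⟩ <;>
    filter_upwards [hlaw, hpinch] with ω hω hmean
  · exact limsup_sum_div_sub_sum_div_nonpos (fun i hi => (hmean i hi).2) hω
  · exact liminf_sum_div_sub_sum_div_nonneg (fun i hi => (hmean i hi).1) hω

/-- Almost-sure law for (possibly unbounded) variables: under the pinched-conditional-mean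
hypotheses (gap at most `δ`, variances at most `σ²`) for the infinite sequence `X_1, X_2, …`,
every `P ∈ K` satisfies
`P( limsup_n ((1/n) Σ_{i=1}^n X_i - μ̄_n) ≤ 0 ) = 1` and
`P( liminf_n ((1/n) Σ_{i=1}^n X_i - μ̲_n) ≥ 0 ) = 1`. -/
theorem unbounded_almost_sure_law {Ω : Type*} [m : MeasurableSpace Ω]
    (K : Set (Measure Ω)) (hK : K.Nonempty) (hKp : ∀ P ∈ K, IsProbabilityMeasure P)
    (X : ℕ → Ω → ℝ) (hmeas : ∀ i, Measurable (X i))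
    (hL2 : ∀ P ∈ K, ∀ i, MemLp (X i) 2 P)
    (𝒢 : ℕ → MeasurableSpace Ω)
    (h𝒢 : ∀ i, 𝒢 i = ⨆ j ∈ Finset.Icc 1 i, MeasurableSpace.comap (X j) inferInstance)
    (σ2 δ : ℝ)
    (hvar : ∀ P ∈ K, ∀ i, 1 ≤ i → ∫ ω, (X i ω - ∫ ω', X i ω' ∂P) ^ 2 ∂P ≤ σ2)
    (hgap : ∀ i, 1 ≤ i →
      (⨆ Q ∈ K, ∫ ω', X i ω' ∂Q) - (⨅ Q ∈ K, ∫ ω', X i ω' ∂Q) ≤ δ)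
    (hirr : ∀ P ∈ K, ∀ i, 1 ≤ i →
      ∀ᵐ ω ∂P, (⨅ Q ∈ K, ∫ ω', X i ω' ∂Q) ≤ (P[X i | 𝒢 (i - 1)]) ω ∧
        (P[X i | 𝒢 (i - 1)]) ω ≤ ⨆ Q ∈ K, ∫ ω', X i ω' ∂Q) :
    ∀ P ∈ K,
      P {ω | Filter.limsup
          (fun n : ℕ => (∑ i ∈ Finset.Icc 1 n, X i ω) / n -
            (∑ i ∈ Finset.Icc 1 n, ⨆ Q ∈ K, ∫ ω', X i ω' ∂Q) / n) Filter.atTop ≤ 0} = 1 ∧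
      P {ω | 0 ≤ Filter.liminf
          (fun n : ℕ => (∑ i ∈ Finset.Icc 1 n, X i ω) / n -
            (∑ i ∈ Finset.Icc 1 n, ⨅ Q ∈ K, ∫ ω', X i ω' ∂Q) / n) Filter.atTop} = 1 :=
  unbounded_almost_sure_law_general (m := m) K hKp X hmeas hL2 𝒢 h𝒢 σ2 hvar hirr
end

section
/- For the credal set K of the counterexample (convex hull of P_1, P_2, P_3 as above), the condition Ē[f(X_i) | A(X_{1:i−1})] = Ē[f(X_i)] holds for every event A with inf_{P∈K} P(A) > 0; specifically, for every i and every event A(X_{1:i−1}) with lower probability > 0, the conditional probability P(X_i = 1 | A) lies in [1−δ, 1] for every P ∈ K with P(A) > 0. -/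
open MeasureTheory

/-- Extend a finite boolean vector by `true`s. -/
def extFn (i : ℕ) (v : Fin i → Bool) : ℕ → Bool :=
  fun j => if h : j < i then v ⟨j, h⟩ else true

lemma cylMeas (x : ℕ → Bool) (n : ℕ) :
    MeasurableSet {ω : ℕ → Bool | ∀ j < n, ω j = x j} := by
  have : {ω : ℕ → Bool | ∀ j < n, ω j = x j}
      = ⋂ j ∈ Finset.range n, {ω : ℕ → Bool | ω j = x j} := by
    ext ω; simp [Finset.mem_range]
  rw [this]
  exact MeasurableSet.biInter (Set.to_countable _) fun j _ =>
    show MeasurableSet ((fun ω : ℕ → Bool => ω j) ⁻¹' {x j}) from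
      measurable_pi_apply j (measurableSet_singleton (x j))

lemma P3_cond (δ : ℝ) (P3 : Measure (ℕ → Bool))
    (hP3 : ∀ (n : ℕ) (x : ℕ → Bool),
      P3 {ω | ∀ j < n, ω j = x j} =
        ∏ j ∈ Finset.range n, ENNReal.ofReal (if x j then 1 - δ else δ))
    (i : ℕ) (A : Set (ℕ → Bool))
    (hAdep : ∀ ω ω' : ℕ → Bool, (∀ j < i, ω j = ω' j) → (ω ∈ A ↔ ω' ∈ A)) :
    P3 (A ∩ {ω | ω i = true}) = ENNReal.ofReal (1 - δ) * P3 A := by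
  classical
  set S : Finset (Fin i → Bool) := Finset.univ.filter (fun v => extFn i v ∈ A) with hS
  have hext_lt : ∀ (v : Fin i → Bool) (j : ℕ) (h : j < i), extFn i v j = v ⟨j, h⟩ := by
    intro v j h; simp [extFn, h]
  have hext_true : ∀ (v : Fin i → Bool), extFn i v i = true := by
    intro v; simp [extFn]
  have hdisj : ∀ (n : ℕ), i ≤ n →
      (↑S : Set (Fin i → Bool)).Pairwise (fun v w =>
        Disjoint {ω : ℕ → Bool | ∀ j < n, ω j = extFn i v j}
                 {ω : ℕ → Bool | ∀ j < n, ω j = extFn i w j}) := by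
    intro n hn v _ w _ hvw
    rw [Set.disjoint_left]
    intro ω hv hw
    apply hvw
    funext j
    have h1 := hv j (lt_of_lt_of_le j.2 hn)
    have h2 := hw j (lt_of_lt_of_le j.2 hn)
    rw [hext_lt v j j.2] at h1
    rw [hext_lt w j j.2] at h2
    rw [← h1, ← h2]
  have hmemA : ∀ ω : ℕ → Bool, ω ∈ A ↔ (fun j : Fin i => ω j) ∈ S := by
    intro ω
    have : ∀ j < i, ω j = extFn i (fun j : Fin i => ω j) j := by
      intro j hj; rw [hext_lt _ j hj]
    rw [hS, Finset.mem_filter]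
    simp only [Finset.mem_univ, true_and]
    exact hAdep ω _ this
  have hAeq : A = ⋃ v ∈ S, {ω : ℕ → Bool | ∀ j < i, ω j = extFn i v j} := by
    ext ω
    simp only [Set.mem_iUnion]
    constructor
    · intro h
      exact ⟨fun j : Fin i => ω j, (hmemA ω).mp h,
        fun j hj => (hext_lt (fun j : Fin i => ω j) j hj).symm⟩
    · rintro ⟨v, hv, hvω⟩
      have : extFn i v ∈ A := by
        rw [hS, Finset.mem_filter] at hv; exact hv.2
      exact (hAdep ω (extFn i v) hvω).mpr this
  have hATeq : A ∩ {ω | ω i = true}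
      = ⋃ v ∈ S, {ω : ℕ → Bool | ∀ j < i + 1, ω j = extFn i v j} := by
    ext ω
    simp only [Set.mem_iUnion, Set.mem_inter_iff, Set.mem_setOf_eq]
    constructor
    · rintro ⟨hωA, hωi⟩
      refine ⟨fun j : Fin i => ω j, (hmemA ω).mp hωA, fun j hj => ?_⟩
      rcases Nat.lt_succ_iff_lt_or_eq.mp hj with h | h
      · rw [hext_lt _ j h]
      · subst h; rw [hext_true]; exact hωi
    · rintro ⟨v, hv, hvω⟩
      have hA' : extFn i v ∈ A := by
        rw [hS, Finset.mem_filter] at hv; exact hv.2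
      refine ⟨(hAdep ω (extFn i v) fun j hj => hvω j (Nat.lt_succ_of_lt hj)).mpr hA', ?_⟩
      rw [hvω i (Nat.lt_succ_self i), hext_true]
  rw [hATeq, hAeq,
    measure_biUnion_finset (hdisj (i + 1) (Nat.le_succ i)) (fun v _ => cylMeas _ _),
    measure_biUnion_finset (hdisj i le_rfl) (fun v _ => cylMeas _ _),
    Finset.mul_sum]
  refine Finset.sum_congr rfl fun v hv => ?_
  rw [hP3, hP3, Finset.prod_range_succ, hext_true, if_pos rfl, mul_comm]

/-- In the counterexample credal set `K` (convex hull of `P₁`, `P₂`, `P₃` as in the paper),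
for every `i` and every measurable event `A` determined by the coordinates before `i` with
positive lower probability, and every `P ∈ K` with `P(A) > 0`, the conditional probability
`P(X_i = 1 | A)` lies in `[1-δ, 1]`. -/
theorem counterexample_conditional_bounds
    (δ : ℝ) (hδ0 : 0 < δ) (hδ1 : δ < 1)
    (P3 : Measure (ℕ → Bool)) [IsProbabilityMeasure P3]
    (hP3 : ∀ (n : ℕ) (x : ℕ → Bool),
      P3 {ω | ∀ i < n, ω i = x i} =
        ∏ i ∈ Finset.range n, ENNReal.ofReal (if x i then 1 - δ else δ))
    (K : Set (Measure (ℕ → Bool)))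
    (hKdef : K = {P | ∃ a b c : ENNReal, a + b + c = 1 ∧
      P = a • Measure.dirac (fun _ => true) +
          b • (ENNReal.ofReal δ • Measure.dirac (fun _ => false) +
               ENNReal.ofReal (1 - δ) • Measure.dirac (fun _ => true)) +
          c • P3}) :
    ∀ (i : ℕ) (A : Set (ℕ → Bool)), MeasurableSet A →
      (∀ ω ω' : ℕ → Bool, (∀ j < i, ω j = ω' j) → (ω ∈ A ↔ ω' ∈ A)) →
      0 < sInf ((fun P => (P A).toReal) '' K) →
      ∀ P ∈ K, 0 < (P A).toReal →
        (1 - δ) * (P A).toReal ≤ (P (A ∩ {ω | ω i = true})).toReal ∧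
          (P (A ∩ {ω | ω i = true})).toReal ≤ (P A).toReal := by
  intro i A hA hAdep hinf P hPK hPA
  have hδ1' : (0:ℝ) ≤ 1 - δ := by linarith
  -- the dirac at all-true is in K
  have hP1K : (Measure.dirac (fun _ => true) : Measure (ℕ → Bool)) ∈ K := by
    rw [hKdef]
    exact ⟨1, 0, 0, by simp, by simp⟩
  -- lower bound on elements of K
  have hle : ∀ Q ∈ K, (⨅ P ∈ K, (P A).toReal) ≤ (Q A).toReal := by
    intro Q hQ
    have hb : BddBelow (Set.range fun P : Measure (ℕ → Bool) =>
        ⨅ _ : P ∈ K, ((P A).toReal)) := by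
      refine ⟨0, ?_⟩
      rintro x ⟨P', rfl⟩
      exact Real.iInf_nonneg fun _ => ENNReal.toReal_nonneg
    refine ciInf_le_of_le hb Q ?_
    exact ciInf_le ⟨0, by rintro x ⟨_, rfl⟩; exact ENNReal.toReal_nonneg⟩ hQ
  -- all-true sequence belongs to A
  have htrueA : (fun _ => true) ∈ A := by
    by_contra hmem
    have h1 : ((Measure.dirac (fun _ => true) : Measure (ℕ → Bool)) A).toReal = 0 := by
      rw [Measure.dirac_apply' _ hA, Set.indicator_of_notMem hmem]
      simp
    have : 0 < ((Measure.dirac (fun _ => true) : Measure (ℕ → Bool)) A).toReal :=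
      lt_of_lt_of_le hinf (csInf_le ⟨0, by rintro x ⟨_, _, rfl⟩; exact ENNReal.toReal_nonneg⟩
        (Set.mem_image_of_mem _ hP1K))
    rw [h1] at this
    exact lt_irrefl 0 this
  -- decompose P
  rw [hKdef] at hPK
  obtain ⟨a, b, c, habc, hP⟩ := hPK
  set T : Set (ℕ → Bool) := {ω | ω i = true} with hT
  have hTmeas : MeasurableSet T :=
    show MeasurableSet ((fun ω : ℕ → Bool => ω i) ⁻¹' {true}) from
      measurable_pi_apply i (measurableSet_singleton true)
  have hATmeas : MeasurableSet (A ∩ T) := hA.inter hTmeas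
  have htrueT : (fun _ : ℕ => true) ∈ T := rfl
  have hfalseT : (fun _ : ℕ => false) ∉ T := by simp [hT]
  -- dirac values
  have hd1A : (Measure.dirac (fun _ => true) : Measure (ℕ → Bool)) A = 1 := by
    rw [Measure.dirac_apply' _ hA, Set.indicator_of_mem htrueA]; rfl
  have hd1AT : (Measure.dirac (fun _ => true) : Measure (ℕ → Bool)) (A ∩ T) = 1 := by
    rw [Measure.dirac_apply' _ hATmeas, Set.indicator_of_mem (Set.mem_inter htrueA htrueT)]; rfl
  have hd0AT : (Measure.dirac (fun _ => false) : Measure (ℕ → Bool)) (A ∩ T) = 0 := by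
    rw [Measure.dirac_apply' _ hATmeas,
      Set.indicator_of_notMem (fun h => hfalseT h.2)]
  have hd0A_le : (Measure.dirac (fun _ => false) : Measure (ℕ → Bool)) A ≤ 1 :=
    prob_le_one
  -- P3 key identity
  have hP3key : P3 (A ∩ T) = ENNReal.ofReal (1 - δ) * P3 A :=
    P3_cond δ P3 hP3 i A hAdep
  -- evaluate P on A and on A ∩ T
  have hPA_eval : P A = a + b * (ENNReal.ofReal δ *
      (Measure.dirac (fun _ => false) : Measure (ℕ → Bool)) A + ENNReal.ofReal (1 - δ))
      + c * P3 A := by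
    rw [hP]
    simp [Measure.add_apply, Measure.smul_apply, smul_eq_mul, hd1A, mul_add]
  have hPAT_eval : P (A ∩ T) = a + b * ENNReal.ofReal (1 - δ)
      + c * (ENNReal.ofReal (1 - δ) * P3 A) := by
    rw [hP]
    simp [Measure.add_apply, Measure.smul_apply, smul_eq_mul, hd1AT, hd0AT, hP3key, mul_add]
  -- sum of ofReal δ and ofReal (1-δ)
  have hsum1 : ENNReal.ofReal δ + ENNReal.ofReal (1 - δ) = 1 := by
    rw [← ENNReal.ofReal_add hδ0.le hδ1']
    norm_num
  -- finiteness: P is a probability measure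
  have hPuniv : P Set.univ = 1 := by
    rw [hP]
    simp only [Measure.add_apply, Measure.smul_apply, smul_eq_mul, measure_univ,
      mul_one, mul_add]
    rw [← mul_add, hsum1, mul_one]
    exact habc
  have hPAfin : P A ≠ ⊤ := by
    have h : P A ≤ 1 := hPuniv ▸ measure_mono (Set.subset_univ A)
    exact (h.trans_lt ENNReal.one_lt_top).ne
  have hPATfin : P (A ∩ T) ≠ ⊤ := by
    have h : P (A ∩ T) ≤ 1 := hPuniv ▸ measure_mono (Set.subset_univ _)
    exact (h.trans_lt ENNReal.one_lt_top).ne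
  have hX1 : ENNReal.ofReal δ * (Measure.dirac (fun _ => false) : Measure (ℕ → Bool)) A
      + ENNReal.ofReal (1 - δ) ≤ 1 := by
    calc ENNReal.ofReal δ * (Measure.dirac (fun _ => false) : Measure (ℕ → Bool)) A
          + ENNReal.ofReal (1 - δ)
        ≤ ENNReal.ofReal δ * 1 + ENNReal.ofReal (1 - δ) := by gcongr
      _ = 1 := by rw [mul_one, hsum1]
  have key : ENNReal.ofReal (1 - δ) * P A ≤ P (A ∩ T) := by
    rw [hPA_eval, hPAT_eval, mul_add, mul_add]
    refine add_le_add (add_le_add ?_ ?_) ?_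
    · calc ENNReal.ofReal (1 - δ) * a ≤ 1 * a :=
            mul_le_mul_left (ENNReal.ofReal_le_one.mpr (by linarith)) a
        _ = a := one_mul a
    · calc ENNReal.ofReal (1 - δ) * (b * (ENNReal.ofReal δ *
            (Measure.dirac (fun _ => false) : Measure (ℕ → Bool)) A + ENNReal.ofReal (1 - δ)))
          ≤ ENNReal.ofReal (1 - δ) * (b * 1) := by gcongr
        _ = b * ENNReal.ofReal (1 - δ) := by rw [mul_one, mul_comm]
    · exact le_of_eq (by ring)
  constructor
  · have h1 : (ENNReal.ofReal (1 - δ) * P A).toReal ≤ (P (A ∩ T)).toReal :=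
      ENNReal.toReal_mono hPATfin key
    rwa [ENNReal.toReal_mul, ENNReal.toReal_ofReal hδ1'] at h1
  · exact ENNReal.toReal_mono hPAfin (measure_mono Set.inter_subset_left)
end
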